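/- arXiv:2510.11446 — 7 statements merged into one kernel-verified Lean document; each statement's English description precedes it below -/
import Mathlib

section
/- For any element w of a Coxeter group W acting on its root system, the inversion set Φ_w = Φ⁺ ∩ w(Φ⁻) is closed: if α, β ∈ Φ_w and a, b are nonnegative reals with aα + bβ ∈ Φ⁺, then aα + bβ ∈ Φ_w. -/
/-! Pull the combination back by `w`: `x = a • α' + b • β'` with `α = w α'`, `β = w β'` and
`α', β'` negative roots. Since `w x = a • α + b • β` is a root, so is `x`; and `-x` is a
nonnegative combination of simple roots, so `x` cannot be positive and is therefore negative. -/

section NonnegCombination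

variable {B V : Type*} [AddCommGroup V] [Module ℝ V]

def IsNonnegCombination (αs : B → V) (v : V) : Prop :=
  ∃ c : B →₀ ℝ, (∀ i, 0 ≤ c i) ∧ v = c.sum fun i r => r • αs i

theorem IsNonnegCombination.smul_add_smul {αs : B → V} {v v' : V}
    (hv : IsNonnegCombination αs v) (hv' : IsNonnegCombination αs v') {a b : ℝ}
    (ha : 0 ≤ a) (hb : 0 ≤ b) : IsNonnegCombination αs (a • v + b • v') := by
  obtain ⟨c, hc, rfl⟩ := hv
  obtain ⟨d, hd, rfl⟩ := hv'
  refine ⟨a • c + b • d, fun i => ?_, ?_⟩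
  · simpa using add_nonneg (mul_nonneg ha (hc i)) (mul_nonneg hb (hd i))
  · rw [Finsupp.sum_add_index' (by simp) (fun _ _ _ => add_smul _ _ _),
      Finsupp.sum_smul_index' (by simp), Finsupp.sum_smul_index' (by simp),
      Finsupp.smul_sum, Finsupp.smul_sum]
    simp only [smul_eq_mul, mul_smul]

end NonnegCombination

theorem mem_orbits_of_apply_mem {B W V : Type*} [Group W] [AddCommGroup V] [Module ℝ V]
    (ρ : W →* (V ≃ₗ[ℝ] V)) (αs : B → V) {u : W} {v : V}
    (h : ρ u v ∈ {v | ∃ (w : W) (i : B), v = ρ w (αs i)}) :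
    v ∈ {v | ∃ (w : W) (i : B), v = ρ w (αs i)} := by
  obtain ⟨w, i, hw⟩ := h
  refine ⟨u⁻¹ * w, i, ?_⟩
  rw [map_mul, map_inv, LinearEquiv.mul_apply, ← hw]
  exact ((ρ u).symm_apply_apply v).symm

theorem inversion_set_closed_general {B W V : Type*} [Group W] [AddCommGroup V] [Module ℝ V]
    (ρ : W →* (V ≃ₗ[ℝ] V)) (αs : B → V)
    (Φ : Set V) (hΦ : Φ = {v | ∃ (w : W) (i : B), v = ρ w (αs i)})
    (Φpos : Set V)
    (hΦpos : Φpos = Φ ∩ {v | ∃ c : B →₀ ℝ, (∀ i, 0 ≤ c i) ∧ v = c.sum fun i r => r • αs i})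
    (hsplit : Φ = Φpos ∪ (-Φpos)) (hdisj : Φpos ∩ (-Φpos) = ∅)
    (w : W) (α β : V)
    (hα : α ∈ Φpos ∩ (ρ w '' (-Φpos))) (hβ : β ∈ Φpos ∩ (ρ w '' (-Φpos)))
    (a b : ℝ) (ha : 0 ≤ a) (hb : 0 ≤ b)
    (hsum : a • α + b • β ∈ Φpos) :
    a • α + b • β ∈ Φpos ∩ (ρ w '' (-Φpos)) := by
  obtain ⟨-, α', hα', rfl⟩ := hα
  obtain ⟨-, β', hβ', rfl⟩ := hβ
  have hρx : ρ w (a • α' + b • β') = a • ρ w α' + b • ρ w β' := by simp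
  have hxΦ : a • α' + b • β' ∈ Φ := by
    have hsumΦ := (hΦpos ▸ hsum).1
    rw [hΦ, ← hρx] at hsumΦ
    exact hΦ ▸ mem_orbits_of_apply_mem ρ αs hsumΦ
  have hx_not_pos : a • α' + b • β' ∉ Φpos := by
    intro hxpos
    have hcomb : IsNonnegCombination αs (a • -α' + b • -β') :=
      IsNonnegCombination.smul_add_smul (hΦpos ▸ hα').2 (hΦpos ▸ hβ').2 ha hb
    have hnegx : -(a • α' + b • β') ∈ Φpos := by
      rw [hΦpos]
      refine ⟨hsplit ▸ Or.inr (Set.neg_mem_neg.mpr hxpos), ?_⟩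
      rwa [neg_add, ← smul_neg, ← smul_neg]
    exact (Set.eq_empty_iff_forall_notMem.mp hdisj) _ ⟨hxpos, hnegx⟩
  rw [hsplit] at hxΦ
  exact ⟨hsum, _, hxΦ.resolve_left hx_not_pos, hρx⟩

/-- For a Coxeter group `W` with its standard geometric representation
`ρ` on a real vector space `V`, simple roots `αs : B → V`, root system
`Φ = W(Δ)`, positive roots `Φ⁺` (the roots that are nonnegative combinations of
simple roots), and negative roots `-Φ⁺` (with `Φ = Φ⁺ ⊔ -Φ⁺`), the inversion
set `Φ_w = Φ⁺ ∩ w(Φ⁻)` is closed: if `α, β ∈ Φ_w` and `a, b ≥ 0` with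
`a•α + b•β ∈ Φ⁺`, then `a•α + b•β ∈ Φ_w`. -/
theorem inversion_set_closed {B W V : Type*} [Group W] [AddCommGroup V] [Module ℝ V]
    (M : CoxeterMatrix B) (cs : CoxeterSystem M W)
    (ρ : W →* (V ≃ₗ[ℝ] V)) (αs : B → V)
    (Φ : Set V) (hΦ : Φ = {v | ∃ (w : W) (i : B), v = ρ w (αs i)})
    (Φpos : Set V)
    (hΦpos : Φpos = Φ ∩ {v | ∃ c : B →₀ ℝ, (∀ i, 0 ≤ c i) ∧ v = c.sum fun i r => r • αs i})
    (hsplit : Φ = Φpos ∪ (-Φpos)) (hdisj : Φpos ∩ (-Φpos) = ∅)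
    (w : W) (α β : V)
    (hα : α ∈ Φpos ∩ (ρ w '' (-Φpos))) (hβ : β ∈ Φpos ∩ (ρ w '' (-Φpos)))
    (a b : ℝ) (ha : 0 ≤ a) (hb : 0 ≤ b)
    (hsum : a • α + b • β ∈ Φpos) :
    a • α + b • β ∈ Φpos ∩ (ρ w '' (-Φpos)) :=
  inversion_set_closed_general ρ αs Φ hΦ Φpos hΦpos hsplit hdisj w α β hα hβ a b ha hb hsum
end

section
/- For any element w of a Coxeter group W, the complement of the inversion set Φ_w in Φ⁺ is closed: if α, β ∈ Φ⁺ \ Φ_w and a, b are nonnegative reals with aα + bβ ∈ Φ⁺, then aα + bβ ∉ Φ_w. -/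
/-!
If `γ ∈ Φ⁺` is not an inversion of `w`, then `w⁻¹ γ` is a root that is not negative, hence
positive. So `w⁻¹` sends `α` and `β` into the cone spanned by the simple roots, and with them
the root `w⁻¹ (a • α + b • β) = a • w⁻¹ α + b • w⁻¹ β`; a root in that cone is positive, so
`w⁻¹ (a • α + b • β)` is not negative, i.e. `a • α + b • β` is not an inversion of `w`.
-/

open Set

section

variable {B W V : Type*} [Group W] [AddCommGroup V] [Module ℝ V]

def nonnegCombinations (αs : B → V) : Set V :=
  {v | ∃ c : B →₀ ℝ, (∀ i, 0 ≤ c i) ∧ v = c.sum fun i r => r • αs i}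

theorem smul_add_smul_mem_nonnegCombinations {αs : B → V} {x y : V}
    (hx : x ∈ nonnegCombinations αs) (hy : y ∈ nonnegCombinations αs)
    {a b : ℝ} (ha : 0 ≤ a) (hb : 0 ≤ b) :
    a • x + b • y ∈ nonnegCombinations αs := by
  obtain ⟨c, hc, rfl⟩ := hx
  obtain ⟨d, hd, rfl⟩ := hy
  refine ⟨a • c + b • d, fun i => ?_, ?_⟩
  · simp only [Finsupp.add_apply, Finsupp.smul_apply, smul_eq_mul]
    exact add_nonneg (mul_nonneg ha (hc i)) (mul_nonneg hb (hd i))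
  · have hzero (i : B) : (0 : ℝ) • αs i = 0 := zero_smul ℝ (αs i)
    rw [Finsupp.sum_add_index' hzero fun i _ _ => add_smul _ _ (αs i),
      Finsupp.sum_smul_index' hzero, Finsupp.sum_smul_index' hzero,
      Finsupp.smul_sum, Finsupp.smul_sum]
    simp only [smul_assoc]

theorem mapsTo_of_eq_orbit (ρ : W →* (V ≃ₗ[ℝ] V)) {αs : B → V} {Φ : Set V}
    (hΦ : Φ = {v | ∃ (w : W) (i : B), v = ρ w (αs i)}) (u : W) :
    MapsTo (ρ u) Φ Φ := by
  subst hΦ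
  rintro _ ⟨w, i, rfl⟩
  exact ⟨u * w, i, by rw [map_mul]; rfl⟩

theorem inv_apply_mem_of_notMem_image_neg (ρ : W →* (V ≃ₗ[ℝ] V)) {Φ Φpos : Set V}
    (hmaps : ∀ u, MapsTo (ρ u) Φ Φ) (hsplit : Φ = Φpos ∪ -Φpos) {w : W} {γ : V}
    (hγ : γ ∈ Φpos \ (Φpos ∩ (ρ w '' (-Φpos)))) :
    ρ w⁻¹ γ ∈ Φpos := by
  obtain ⟨hγpos, hγinv⟩ := hγ
  have hroot : ρ w⁻¹ γ ∈ Φpos ∪ -Φpos :=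
    hsplit ▸ hmaps w⁻¹ (hsplit ▸ Or.inl hγpos)
  refine hroot.resolve_right fun hneg => hγinv ⟨hγpos, ρ w⁻¹ γ, hneg, ?_⟩
  simp [map_inv]

end

theorem inversion_set_coclosed_general {B W V : Type*} [Group W] [AddCommGroup V] [Module ℝ V]
    (ρ : W →* (V ≃ₗ[ℝ] V)) (αs : B → V)
    (Φ : Set V) (hΦ : Φ = {v | ∃ (w : W) (i : B), v = ρ w (αs i)})
    (Φpos : Set V)
    (hΦpos : Φpos = Φ ∩ {v | ∃ c : B →₀ ℝ, (∀ i, 0 ≤ c i) ∧ v = c.sum fun i r => r • αs i})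
    (hsplit : Φ = Φpos ∪ (-Φpos)) (hdisj : Φpos ∩ (-Φpos) = ∅)
    (w : W) (α β : V)
    (hα : α ∈ Φpos \ (Φpos ∩ (ρ w '' (-Φpos))))
    (hβ : β ∈ Φpos \ (Φpos ∩ (ρ w '' (-Φpos))))
    (a b : ℝ) (ha : 0 ≤ a) (hb : 0 ≤ b) :
    a • α + b • β ∉ Φpos ∩ (ρ w '' (-Φpos)) := by
  rintro ⟨-, x, hxneg, hwx⟩
  have hmaps := mapsTo_of_eq_orbit ρ hΦ
  have hα' := inv_apply_mem_of_notMem_image_neg ρ hmaps hsplit hα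
  have hβ' := inv_apply_mem_of_notMem_image_neg ρ hmaps hsplit hβ
  have hx : x = a • ρ w⁻¹ α + b • ρ w⁻¹ β := by
    rw [← map_smul, ← map_smul, ← map_add, ← hwx]
    simp [map_inv]
  have hxcone : x ∈ nonnegCombinations αs := hx ▸
    smul_add_smul_mem_nonnegCombinations (hΦpos ▸ hα').2 (hΦpos ▸ hβ').2 ha hb
  have hxpos : x ∈ Φpos := hΦpos ▸ ⟨hsplit ▸ Or.inr hxneg, hxcone⟩
  exact eq_empty_iff_forall_notMem.mp hdisj x ⟨hxpos, hxneg⟩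

/-- With the standard geometric representation of a Coxeter group, the
complement in `Φ⁺` of the inversion set `Φ_w = Φ⁺ ∩ w(Φ⁻)` is closed: if
`α, β ∈ Φ⁺ \ Φ_w` and `a, b ≥ 0` with `a•α + b•β ∈ Φ⁺`, then `a•α + b•β ∉ Φ_w`. -/
theorem inversion_set_coclosed {B W V : Type*} [Group W] [AddCommGroup V] [Module ℝ V]
    (M : CoxeterMatrix B) (cs : CoxeterSystem M W)
    (ρ : W →* (V ≃ₗ[ℝ] V)) (αs : B → V)
    (Φ : Set V) (hΦ : Φ = {v | ∃ (w : W) (i : B), v = ρ w (αs i)})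
    (Φpos : Set V)
    (hΦpos : Φpos = Φ ∩ {v | ∃ c : B →₀ ℝ, (∀ i, 0 ≤ c i) ∧ v = c.sum fun i r => r • αs i})
    (hsplit : Φ = Φpos ∪ (-Φpos)) (hdisj : Φpos ∩ (-Φpos) = ∅)
    (w : W) (α β : V)
    (hα : α ∈ Φpos \ (Φpos ∩ (ρ w '' (-Φpos))))
    (hβ : β ∈ Φpos \ (Φpos ∩ (ρ w '' (-Φpos))))
    (a b : ℝ) (ha : 0 ≤ a) (hb : 0 ≤ b)
    (hsum : a • α + b • β ∈ Φpos) :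
    a • α + b • β ∉ Φpos ∩ (ρ w '' (-Φpos)) :=
  inversion_set_coclosed_general ρ αs Φ hΦ Φpos hΦpos hsplit hdisj w α β hα hβ a b ha hb
end

section
/- Let 1 ≤ a < b ≤ n, l ≥ 2, and a = i_0 < i_1 < ... < i_l = b a strictly increasing chain. For 0 ≤ k ≤ l-1, define σ_k = (i_k i_{k+1})···(i_1 i_2)(a i_1) ∈ S_n. Then for each k ∈ {1,...,l-1}, inv(σ_k) = inv(σ_{k-1}) + 2(i_{k+1} - i_k) - 1; in particular inv(σ_k) > inv(σ_{k-1}). -/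
/-!
Since `σ_k = (i_k i_{k+1}) σ_{k-1}` and `σ_{k-1}` sends `i_0` to `i_k` while fixing every point
above `i_k`, no pair of values inverted by `t = (i_k i_{k+1})` is inverted by `σ_{k-1}⁻¹`.
Lengths are then additive, `inv(t σ_{k-1}) = inv(t) + inv(σ_{k-1})`, and the transposition `t`
has exactly `2(i_{k+1} - i_k) - 1` inversions.
-/

open Equiv

/-- The number of inversions of a permutation of `{0, …, n-1}` (= Coxeter length). -/
def invNum {n : ℕ} (π : Equiv.Perm (Fin n)) : ℕ :=
  (Finset.univ.filter (fun p : Fin n × Fin n => p.1 < p.2 ∧ π p.2 < π p.1)).card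

/-- The inversion set of a permutation. -/
def InvSet {n : ℕ} (π : Equiv.Perm (Fin n)) : Set (Fin n × Fin n) :=
  {p | p.1 < p.2 ∧ π p.2 < π p.1}

/-- Right weak order: `u ≤_R v` iff `ℓ(u) + ℓ(u⁻¹v) = ℓ(v)`. -/
def wleR {n : ℕ} (u v : Equiv.Perm (Fin n)) : Prop :=
  invNum u + invNum (u⁻¹ * v) = invNum v

/-- The left-reflection set `T_L(σ)` of transpositions `t` with `ℓ(tσ) < ℓ(σ)`. -/
def TL {n : ℕ} (σ : Equiv.Perm (Fin n)) : Set (Equiv.Perm (Fin n)) :=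
  {t | t.IsSwap ∧ invNum (t * σ) < invNum σ}

/-- `σ_k = (i_k i_{k+1}) ⋯ (i_1 i_2)(i_0 i_1)` (product written left to right). -/
def sigmaChain {n : ℕ} (i : ℕ → Fin n) (k : ℕ) : Equiv.Perm (Fin n) :=
  (((List.range (k + 1)).map (fun r => Equiv.swap (i r) (i (r + 1)))).reverse).prod

open Finset

variable {n : ℕ}

theorem invNum_mul_of_disjoint {π σ : Perm (Fin n)} (h : Disjoint (InvSet π) (InvSet σ⁻¹)) :
    invNum (π * σ) = invNum π + invNum σ := by
  have hkeep : ∀ x y, x < y → σ y < σ x → π (σ y) < π (σ x) := by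
    intro x y hxy hσ
    refine lt_of_le_of_ne (not_lt.1 fun hπ => h.notMem_of_mem_left (a := (σ y, σ x))
      ⟨hσ, hπ⟩ ⟨hσ, by simpa using hxy⟩) (π.injective.ne (σ.injective.ne hxy.ne'))
  have hnew : ∀ x y, σ x < σ y → π (σ y) < π (σ x) → x < y := by
    intro x y hσ hπ
    refine lt_of_le_of_ne (not_lt.1 fun hyx => h.notMem_of_mem_left (a := (σ x, σ y))
      ⟨hσ, hπ⟩ ⟨hσ, by simpa using hyx⟩) fun hxy => hσ.ne (congrArg σ hxy)
  unfold invNum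
  rw [← card_filter_add_card_filter_not (s := univ.filter _) (fun p => σ p.2 < σ p.1),
    filter_filter, filter_filter, add_comm]
  congr 1
  · refine card_equiv (σ.prodCongr σ) fun ⟨x, y⟩ => ?_
    simp only [mem_filter, mem_univ, true_and, Perm.coe_mul, Function.comp_apply,
      prodCongr_apply, Prod.map_apply, not_lt]
    exact ⟨fun ⟨⟨_, hπ⟩, hσ⟩ => ⟨lt_of_le_of_ne hσ fun he => hπ.ne (by rw [he]), hπ⟩,
      fun ⟨hσ, hπ⟩ => ⟨⟨hnew x y hσ hπ, hπ⟩, hσ.le⟩⟩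
  · refine congrArg card (filter_congr fun ⟨x, y⟩ _ => ?_)
    simp only [Perm.coe_mul, Function.comp_apply]
    exact ⟨fun ⟨⟨hxy, _⟩, hσ⟩ => ⟨hxy, hσ⟩, fun ⟨hxy, hσ⟩ => ⟨⟨hxy, hkeep x y hxy hσ⟩, hσ⟩⟩

theorem swap_apply_lt_swap_apply_iff {u v a b : Fin n} (huv : u < v) (hab : a < b) :
    swap u v b < swap u v a ↔ (a = u ∧ b ≤ v) ∨ (u < a ∧ b = v) := by
  simp only [swap_apply_def, Fin.lt_def, Fin.le_def, Fin.ext_iff] at huv hab ⊢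
  split_ifs <;> omega

theorem invNum_swap {u v : Fin n} (huv : u < v) : invNum (swap u v) = 2 * ((v : ℕ) - u) - 1 := by
  have hinv : univ.filter (fun p : Fin n × Fin n => p.1 < p.2 ∧ swap u v p.2 < swap u v p.1) =
      ({u} ×ˢ Ioc u v) ∪ (Ioo u v ×ˢ {v}) := by
    ext ⟨a, b⟩
    simp only [mem_filter, mem_univ, true_and, mem_union, mem_product, mem_singleton, mem_Ioc,
      mem_Ioo]
    constructor
    · rintro ⟨hab, hswap⟩
      rcases (swap_apply_lt_swap_apply_iff huv hab).1 hswap with ⟨rfl, hb⟩ | ⟨ha, rfl⟩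
      exacts [Or.inl ⟨rfl, hab, hb⟩, Or.inr ⟨⟨ha, hab⟩, rfl⟩]
    · rintro (⟨rfl, hab, hb⟩ | ⟨⟨ha, hab⟩, rfl⟩)
      exacts [⟨hab, (swap_apply_lt_swap_apply_iff huv hab).2 (Or.inl ⟨rfl, hb⟩)⟩,
        ⟨hab, (swap_apply_lt_swap_apply_iff huv hab).2 (Or.inr ⟨ha, rfl⟩)⟩]
  have hdisj : Disjoint ({u} ×ˢ Ioc u v) (Ioo u v ×ˢ {v}) :=
    disjoint_left.2 fun ⟨a, b⟩ h₁ h₂ => by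
      simp only [mem_product, mem_singleton, mem_Ioo] at h₁ h₂
      exact h₂.1.1.ne' h₁.1
  rw [invNum, hinv, card_union_of_disjoint hdisj, card_product, card_product, card_singleton,
    card_singleton, Fin.card_Ioc, Fin.card_Ioo]
  have : (u : ℕ) < v := huv
  omega

theorem disjoint_invSet_swap {u v : Fin n} {ρ : Perm (Fin n)} (huv : u < v) (hu : ρ u ≤ u)
    (hfix : ∀ x, u < x → ρ x = x) : Disjoint (InvSet (swap u v)) (InvSet ρ) := by
  refine Set.disjoint_left.2 fun ⟨a, b⟩ ⟨hab, hswap⟩ ⟨_, hρ⟩ => ?_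
  rcases (swap_apply_lt_swap_apply_iff huv hab).1 hswap with ⟨rfl, -⟩ | ⟨ha, rfl⟩
  · rw [hfix b hab] at hρ
    exact (hρ.trans_le hu).not_gt hab
  · rw [hfix a ha, hfix b (ha.trans hab)] at hρ
    exact hρ.not_gt hab

theorem sigmaChain_succ (i : ℕ → Fin n) (m : ℕ) :
    sigmaChain i (m + 1) = swap (i (m + 1)) (i (m + 2)) * sigmaChain i m := by
  simp [sigmaChain, List.range_succ]

theorem sigmaChain_apply_zero (i : ℕ → Fin n) (m : ℕ) : sigmaChain i m (i 0) = i (m + 1) := by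
  induction m with
  | zero => simp [sigmaChain]
  | succ m ih => rw [sigmaChain_succ, Perm.mul_apply, ih, swap_apply_left]

theorem sigmaChain_apply_of_forall_ne (i : ℕ → Fin n) {m : ℕ} {x : Fin n}
    (hx : ∀ r ≤ m + 1, x ≠ i r) : sigmaChain i m x = x := by
  induction m with
  | zero => exact swap_apply_of_ne_of_ne (hx 0 (by omega)) (hx 1 le_rfl)
  | succ m ih =>
    rw [sigmaChain_succ, Perm.mul_apply, ih fun r hr => hx r (by omega)]
    exact swap_apply_of_ne_of_ne (hx (m + 1) (by omega)) (hx (m + 2) le_rfl)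

theorem invNum_sigmaChain_succ_general {n : ℕ} (l : ℕ) (i : ℕ → Fin n)
    (hmono : ∀ r, r < l → i r < i (r + 1)) (k : ℕ) (hk1 : 1 ≤ k) (hk2 : k ≤ l - 1) :
    invNum (sigmaChain i k) =
        invNum (sigmaChain i (k - 1)) + (2 * ((i (k + 1) : ℕ) - (i k : ℕ)) - 1) ∧
    invNum (sigmaChain i (k - 1)) < invNum (sigmaChain i k) := by
  obtain ⟨m, rfl⟩ : ∃ m, k = m + 1 := ⟨k - 1, by omega⟩
  rw [Nat.add_sub_cancel]
  have hmonoOn : MonotoneOn i (Set.Iic l) := monotoneOn_of_le_succ Set.ordConnected_Iic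
    fun r _ _ hr => (hmono r (Order.succ_le_iff.1 hr)).le
  have hstep : i (m + 1) < i (m + 2) := hmono (m + 1) (by omega)
  have hle : ∀ r ≤ m + 1, i r ≤ i (m + 1) := fun r hr =>
    hmonoOn (by simp only [Set.mem_Iic]; omega) (by simp only [Set.mem_Iic]; omega) hr
  have hdisj : Disjoint (InvSet (swap (i (m + 1)) (i (m + 2)))) (InvSet (sigmaChain i m)⁻¹) := by
    refine disjoint_invSet_swap hstep ?_ fun x hx => ?_
    · rw [Perm.inv_eq_iff_eq.2 (sigmaChain_apply_zero i m).symm]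
      exact hle 0 (by omega)
    · exact Perm.inv_eq_iff_eq.2
        (sigmaChain_apply_of_forall_ne i fun r hr => ((hle r hr).trans_lt hx).ne').symm
  have hinv : invNum (sigmaChain i (m + 1)) =
      invNum (sigmaChain i m) + (2 * ((i (m + 1 + 1) : ℕ) - (i (m + 1) : ℕ)) - 1) := by
    rw [sigmaChain_succ, invNum_mul_of_disjoint hdisj, invNum_swap hstep, add_comm]
  refine ⟨hinv, ?_⟩
  have : (i (m + 1) : ℕ) < i (m + 1 + 1) := hstep
  omega

/-- `inv(σ_k) = inv(σ_{k-1}) + 2(i_{k+1} - i_k) - 1`, in particular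
`inv(σ_k) > inv(σ_{k-1})`, for `1 ≤ k ≤ l - 1`. -/
theorem invNum_sigmaChain_succ {n : ℕ} (l : ℕ) (hl : 2 ≤ l) (i : ℕ → Fin n)
    (hmono : ∀ r, r < l → i r < i (r + 1)) (a b : Fin n) (hab : a < b)
    (ha : i 0 = a) (hb : i l = b) (k : ℕ) (hk1 : 1 ≤ k) (hk2 : k ≤ l - 1) :
    invNum (sigmaChain i k) =
        invNum (sigmaChain i (k - 1)) + (2 * ((i (k + 1) : ℕ) - (i k : ℕ)) - 1) ∧
    invNum (sigmaChain i (k - 1)) < invNum (sigmaChain i k) :=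
  invNum_sigmaChain_succ_general l i hmono k hk1 hk2
end

section
/- Let 1 ≤ a < b ≤ n and suppose the transposition (a b) ∈ S_n is written as a product (i_1 j_1)(i_2 j_2)···(i_h j_h) of transpositions (with i_r < j_r) such that the partial products from the right have strictly increasing length: ℓ((i_h j_h)) < ℓ((i_{h-1} j_{h-1})(i_h j_h)) < ... < ℓ((i_1 j_1)···(i_h j_h)). Then every transposition in the product satisfies a ≤ i_r < j_r ≤ b. -/
open Equiv

/-- The product of the last `r` transpositions `(i_{h-r+1} j_{h-r+1}) ⋯ (i_h j_h)`. -/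
def suffixProd {n : ℕ} (i j : ℕ → Fin n) (h r : ℕ) : Equiv.Perm (Fin n) :=
  ((List.range r).map (fun m => Equiv.swap (i (h - r + 1 + m)) (j (h - r + 1 + m)))).prod

lemma invR {n : ℕ} (w : Equiv.Perm (Fin n)) (p0 q0 : Fin n) (hpq : p0 < q0)
    (hw : w p0 < w q0) : invNum w < invNum (w * Equiv.swap p0 q0) := by
  classical
  set w' := w * Equiv.swap p0 q0 with hw'def
  have hne : p0 ≠ q0 := ne_of_lt hpq
  have e0 : w' p0 = w q0 := by
    simp [hw'def, Equiv.Perm.mul_apply, Equiv.swap_apply_left]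
  have e1 : w' q0 = w p0 := by
    simp [hw'def, Equiv.Perm.mul_apply, Equiv.swap_apply_right]
  have e2 : ∀ z, z ≠ p0 → z ≠ q0 → w' z = w z := fun z h1 h2 => by
    simp [hw'def, Equiv.Perm.mul_apply, Equiv.swap_apply_of_ne_of_ne h1 h2]
  set A := Finset.univ.filter (fun p : Fin n × Fin n => p.1 < p.2 ∧ w p.2 < w p.1) with hA
  set B := Finset.univ.filter (fun p : Fin n × Fin n => p.1 < p.2 ∧ w' p.2 < w' p.1) with hB
  have hnotmem : (p0, q0) ∉ A := by
    simp only [hA, Finset.mem_filter, Finset.mem_univ, true_and, not_and]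
    exact fun _ => asymm hw
  set ψ : Fin n × Fin n → Fin n × Fin n := fun pq =>
    if pq.2 = p0 ∧ ¬ (w q0 < w pq.1) then (pq.1, q0)
    else if pq.1 = q0 ∧ ¬ (w pq.2 < w p0) then (p0, pq.2)
    else pq with hψ
  -- description of ψ on elements of S
  have hmem : ∀ p q : Fin n, (p, q) ∈ insert (p0, q0) A ↔
      ((p = p0 ∧ q = q0) ∨ (p < q ∧ w q < w p)) := by
    intro p q
    simp [hA, Finset.mem_insert, Finset.mem_filter, Prod.ext_iff]
  have hmaps : ∀ pq ∈ insert (p0, q0) A, ψ pq ∈ B := by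
    rintro ⟨p, q⟩ hpq'
    rw [hmem] at hpq'
    simp only [hB, Finset.mem_filter, Finset.mem_univ, true_and, hψ]
    split_ifs with h1 h2
    · obtain ⟨hqp0, hnlt⟩ := h1
      rcases hpq' with ⟨hp, hq⟩ | ⟨hlt, hinv⟩
      · exact absurd (hq ▸ hqp0) (Ne.symm hne)
      · rw [hqp0] at hlt hinv
        refine ⟨lt_trans hlt hpq, ?_⟩
        rw [e1, e2 p (ne_of_lt hlt) (ne_of_lt (lt_trans hlt hpq))]
        exact hinv
    · obtain ⟨hpq0, hnlt⟩ := h2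
      rcases hpq' with ⟨hp, hq⟩ | ⟨hlt, hinv⟩
      · exact absurd (hp.symm.trans hpq0) hne
      · rw [hpq0] at hlt hinv
        refine ⟨lt_trans hpq hlt, ?_⟩
        rw [e0, e2 q (ne_of_gt (lt_trans hpq hlt)) (ne_of_gt hlt)]
        exact hinv
    · rcases hpq' with ⟨hp, hq⟩ | ⟨hlt, hinv⟩
      · rw [hp, hq, e0, e1]
        exact ⟨hpq, hw⟩
      · refine ⟨hlt, ?_⟩
        by_cases hq : q = p0
        · have hwlt : w q0 < w p := by
            by_contra hc; exact h1 ⟨hq, hc⟩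
          rw [hq] at hlt
          rw [hq, e0, e2 p (ne_of_lt hlt) (ne_of_lt (lt_trans hlt hpq))]
          exact hwlt
        · by_cases hp : p = q0
          · have hwlt : w q < w p0 := by
              by_contra hc; exact h2 ⟨hp, hc⟩
            rw [hp] at hlt
            rw [hp, e1, e2 q hq (ne_of_gt hlt)]
            exact hwlt
          · by_cases hp' : p = p0
            · have hq' : q ≠ q0 := by
                intro hc; rw [hp', hc] at hinv; exact asymm hw hinv
              rw [hp'] at hlt hinv
              rw [hp', e0, e2 q (ne_of_gt hlt) hq']
              exact lt_trans hinv hw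
            · by_cases hq' : q = q0
              · rw [hq'] at hlt hinv
                rw [hq', e1, e2 p hp' (ne_of_lt hlt)]
                exact lt_trans hw hinv
              · rw [e2 p hp' hp, e2 q hq hq']
                exact hinv
  have hinj : Set.InjOn ψ (insert (p0, q0) A : Finset (Fin n × Fin n)) := by
    rintro ⟨p, q⟩ hu ⟨p', q'⟩ hv heq
    rw [Finset.mem_coe, hmem] at hu hv
    simp only [hψ] at heq
    by_cases c1 : q = p0 ∧ ¬ (w q0 < w p)
    · rw [if_pos c1] at heq
      -- input u is in branch A: u is an inversion with q = p0, p < p0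
      have hup : p < p0 := by
        rcases hu with ⟨hp, hq⟩ | ⟨hlt, _⟩
        · exact absurd (hq ▸ c1.1) (Ne.symm hne)
        · exact c1.1 ▸ hlt
      by_cases c2 : q' = p0 ∧ ¬ (w q0 < w p')
      · rw [if_pos c2] at heq
        rw [Prod.mk.injEq] at heq
        exact Prod.ext heq.1 (c1.1.trans c2.1.symm)
      · rw [if_neg c2] at heq
        by_cases c3 : p' = q0 ∧ ¬ (w q' < w p0)
        · rw [if_pos c3] at heq
          rw [Prod.mk.injEq] at heq
          exact absurd (heq.1 ▸ hup) (lt_irrefl p0)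
        · rw [if_neg c3] at heq
          rw [Prod.mk.injEq] at heq
          -- v = (p, q0) literally; v must be an inversion since p < p0
          exfalso
          rcases hv with ⟨hp', hq'⟩ | ⟨hlt', hinv'⟩
          · exact absurd ((heq.1.trans hp') ▸ hup) (lt_irrefl p0)
          · rw [← heq.1, ← heq.2] at hinv'
            exact c1.2 hinv'
    · rw [if_neg c1] at heq
      by_cases c1' : p = q0 ∧ ¬ (w q < w p0)
      · rw [if_pos c1'] at heq
        have huq : q0 < q := by
          rcases hu with ⟨hp, hq⟩ | ⟨hlt, _⟩
          · exact absurd (hp.symm.trans c1'.1) hne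
          · exact c1'.1 ▸ hlt
        by_cases c2 : q' = p0 ∧ ¬ (w q0 < w p')
        · rw [if_pos c2] at heq
          rw [Prod.mk.injEq] at heq
          -- (p0, q) = (p', q0): q = q0 contradicts q0 < q
          exact absurd (heq.2 ▸ huq) (lt_irrefl q0)
        · rw [if_neg c2] at heq
          by_cases c3 : p' = q0 ∧ ¬ (w q' < w p0)
          · rw [if_pos c3] at heq
            rw [Prod.mk.injEq] at heq
            exact Prod.ext (c1'.1.trans c3.1.symm) heq.2
          · rw [if_neg c3] at heq
            rw [Prod.mk.injEq] at heq
            exfalso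
            rcases hv with ⟨hp', hq'⟩ | ⟨hlt', hinv'⟩
            · exact absurd ((heq.2.trans hq') ▸ huq) (lt_irrefl q0)
            · rw [← heq.1, ← heq.2] at hinv'
              exact c1'.2 hinv'
      · rw [if_neg c1'] at heq
        by_cases c2 : q' = p0 ∧ ¬ (w q0 < w p')
        · rw [if_pos c2] at heq
          rw [Prod.mk.injEq] at heq
          exfalso
          have hvp : p' < p0 := by
            rcases hv with ⟨hp', hq'⟩ | ⟨hlt', _⟩
            · exact absurd (hq' ▸ c2.1) (Ne.symm hne)
            · exact c2.1 ▸ hlt'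
          rcases hu with ⟨hp, hq⟩ | ⟨hlt, hinv⟩
          · exact absurd ((heq.1.symm.trans hp) ▸ hvp) (lt_irrefl p0)
          · rw [heq.1, heq.2] at hinv
            exact c2.2 hinv
        · rw [if_neg c2] at heq
          by_cases c3 : p' = q0 ∧ ¬ (w q' < w p0)
          · rw [if_pos c3] at heq
            rw [Prod.mk.injEq] at heq
            exfalso
            have hvq : q0 < q' := by
              rcases hv with ⟨hp', hq'⟩ | ⟨hlt', _⟩
              · exact absurd (hp'.symm.trans c3.1) hne
              · exact c3.1 ▸ hlt'
            rcases hu with ⟨hp, hq⟩ | ⟨hlt, hinv⟩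
            · exact absurd ((heq.2.symm.trans hq) ▸ hvq) (lt_irrefl q0)
            · rw [heq.1, heq.2] at hinv
              exact c3.2 hinv
          · rw [if_neg c3] at heq
            exact heq
  have hcard := Finset.card_le_card_of_injOn ψ hmaps hinj
  rw [Finset.card_insert_of_notMem hnotmem] at hcard
  have hAc : invNum w = A.card := rfl
  have hBc : invNum w' = B.card := rfl
  omega

lemma perm_apply_inv_self {α : Type*} (f : Equiv.Perm α) (x : α) : f (f⁻¹ x) = x :=
  Equiv.apply_symm_apply f x

lemma invL {n : ℕ} (w : Equiv.Perm (Fin n)) (x y : Fin n) (hxy : x < y)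
    (hlt : invNum (Equiv.swap x y * w) < invNum w) : w⁻¹ y < w⁻¹ x := by
  have hkey : Equiv.swap x y * w = w * Equiv.swap (w⁻¹ x) (w⁻¹ y) := by
    have := Equiv.swap_apply_apply w (w⁻¹ x) (w⁻¹ y)
    rw [perm_apply_inv_self, perm_apply_inv_self] at this
    rw [this]
    group
  rcases lt_trichotomy (w⁻¹ x) (w⁻¹ y) with hc | hc | hc
  · exfalso
    have := invR w (w⁻¹ x) (w⁻¹ y) hc
      (by rw [perm_apply_inv_self, perm_apply_inv_self]; exact hxy)
    rw [← hkey] at this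
    exact absurd hlt (not_lt.2 (le_of_lt this))
  · exfalso
    have : x = y := w⁻¹.injective hc
    exact absurd (this ▸ hxy) (lt_irrefl y)
  · exact hc

/-- The key step: if `w'` fixes everything outside `[a,b]` and left-multiplying
by `swap x y` (with `x < y`) strictly decreases the length, then `a ≤ x` and `y ≤ b`. -/
lemma step_bounds {n : ℕ} (a b x y : Fin n) (hxy : x < y) (w' : Equiv.Perm (Fin n))
    (hfix : ∀ z : Fin n, z < a ∨ b < z → w' z = z)
    (hlen : invNum (Equiv.swap x y * w') < invNum w') : a ≤ x ∧ y ≤ b := by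
  have hkey := invL w' x y hxy hlen
  have hfix' : ∀ z : Fin n, z < a ∨ b < z → w'⁻¹ z = z := by
    intro z hz
    have := hfix z hz
    exact w'.injective (by rw [perm_apply_inv_self, this])
  have hin : ∀ z : Fin n, a ≤ z → z ≤ b → a ≤ w'⁻¹ z ∧ w'⁻¹ z ≤ b := by
    intro z h1 h2
    have hnc : ¬ (w'⁻¹ z < a ∨ b < w'⁻¹ z) := by
      intro hc
      have h3 := hfix _ hc
      rw [perm_apply_inv_self] at h3
      rcases hc with hc | hc
      · rw [← h3] at hc; exact absurd h1 (not_le.2 hc)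
      · rw [← h3] at hc; exact absurd h2 (not_le.2 hc)
    rw [not_or, not_lt, not_lt] at hnc
    exact hnc
  constructor
  · by_contra hc
    rw [not_le] at hc
    have hx : w'⁻¹ x = x := hfix' x (Or.inl hc)
    rcases le_or_gt a y with hy1 | hy1
    · rcases le_or_gt y b with hy2 | hy2
      · have := (hin y hy1 hy2).1
        rw [hx] at hkey
        exact absurd (lt_trans hkey hc) (not_lt.2 this)
      · have : w'⁻¹ y = y := hfix' y (Or.inr hy2)
        rw [hx, this] at hkey
        exact asymm hxy hkey
    · have : w'⁻¹ y = y := hfix' y (Or.inl hy1)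
      rw [hx, this] at hkey
      exact asymm hxy hkey
  · by_contra hc
    rw [not_le] at hc
    have hy : w'⁻¹ y = y := hfix' y (Or.inr hc)
    rcases le_or_gt a x with hx1 | hx1
    · rcases le_or_gt x b with hx2 | hx2
      · have := (hin x hx1 hx2).2
        rw [hy] at hkey
        exact absurd (lt_trans hc hkey) (not_lt.2 this)
      · have : w'⁻¹ x = x := hfix' x (Or.inr hx2)
        rw [hy, this] at hkey
        exact asymm hxy hkey
    · have : w'⁻¹ x = x := hfix' x (Or.inl hx1)
      rw [hy, this] at hkey
      exact asymm hxy hkey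

lemma suffixProd_succ {n : ℕ} (i j : ℕ → Fin n) (h r : ℕ) (hr : r < h) :
    suffixProd i j h (r + 1) =
      Equiv.swap (i (h - r)) (j (h - r)) * suffixProd i j h r := by
  unfold suffixProd
  rw [List.range_succ_eq_map, List.map_cons, List.prod_cons, List.map_map]
  have h1 : h - (r + 1) + 1 + 0 = h - r := by omega
  have h2 : ∀ m : ℕ, h - (r + 1) + 1 + (m + 1) = h - r + 1 + m := by omega
  congr 1
  · rw [h1]
  · refine congrArg List.prod (List.map_congr_left fun m _ => ?_)
    simp only [Function.comp]
    rw [h2 m]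

/-- if `(a b) = (i_1 j_1)(i_2 j_2) ⋯ (i_h j_h)` with the partial
products from the right strictly increasing in length, then every factor
satisfies `a ≤ i_r < j_r ≤ b`. -/
theorem bruhat_path_labels_between {n : ℕ} (h : ℕ) (hh : 1 ≤ h) (i j : ℕ → Fin n)
    (hij : ∀ r, 1 ≤ r → r ≤ h → i r < j r) (a b : Fin n) (hab : a < b)
    (hprod : suffixProd i j h h = Equiv.swap a b)
    (hincr : ∀ r, 1 ≤ r → r < h →
      invNum (suffixProd i j h r) < invNum (suffixProd i j h (r + 1))) :
    ∀ r, 1 ≤ r → r ≤ h → a ≤ i r ∧ j r ≤ b := by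
  set σ : ℕ → Equiv.Perm (Fin n) := suffixProd i j h with hσ
  have hσ0 : σ 0 = 1 := by simp [hσ, suffixProd]
  have hstep : ∀ r, r < h → σ (r + 1) = Equiv.swap (i (h - r)) (j (h - r)) * σ r :=
    fun r hr => suffixProd_succ i j h r hr
  have hfixh : ∀ z : Fin n, z < a ∨ b < z → σ h z = z := by
    intro z hz
    rw [hprod]
    rcases hz with hz | hz
    · exact Equiv.swap_apply_of_ne_of_ne (ne_of_lt hz) (ne_of_lt (lt_trans hz hab))
    · exact Equiv.swap_apply_of_ne_of_ne (ne_of_gt (lt_trans hab hz)) (ne_of_gt hz)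
  have hfix : ∀ d, d < h → ∀ z : Fin n, z < a ∨ b < z → σ (h - d) z = z := by
    intro d
    induction d with
    | zero => intro _ z hz; simpa using hfixh z hz
    | succ d ih =>
      intro hd z hz
      have hdh : d < h := by omega
      have hfixprev := ih hdh
      set r := h - (d + 1) with hr
      have hr1 : 1 ≤ r := by omega
      have hrh : r < h := by omega
      have hre : r + 1 = h - d := by omega
      have hfac : h - r = d + 1 := by omega
      have e1 : σ (r + 1) = Equiv.swap (i (d + 1)) (j (d + 1)) * σ r := by
        have := hstep r hrh; rwa [hfac] at this
      have hxy : i (d + 1) < j (d + 1) := hij (d + 1) (by omega) (by omega)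
      have hinvol : Equiv.swap (i (d + 1)) (j (d + 1)) * σ (r + 1) = σ r := by
        rw [e1, ← mul_assoc, Equiv.swap_mul_self, one_mul]
      have hlen : invNum (Equiv.swap (i (d + 1)) (j (d + 1)) * σ (r + 1)) < invNum (σ (r + 1)) := by
        rw [hinvol]
        exact hincr r hr1 hrh
      have hfix1 : ∀ z : Fin n, z < a ∨ b < z → σ (r + 1) z = z := by
        intro z hz
        have h2 := hfixprev z hz
        rwa [← hre] at h2
      obtain ⟨hax, hyb⟩ := step_bounds a b _ _ hxy (σ (r + 1)) hfix1 hlen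
      have hz1 := hfix1 z hz
      have h2 : σ r z = z := by
        rw [← hinvol]
        show Equiv.swap _ _ (σ (r + 1) z) = z
        rw [hz1]
        rcases hz with hz | hz
        · exact Equiv.swap_apply_of_ne_of_ne
            (ne_of_lt (lt_of_lt_of_le hz hax))
            (ne_of_lt (lt_of_lt_of_le hz (le_trans hax (le_of_lt hxy))))
        · exact Equiv.swap_apply_of_ne_of_ne
            (ne_of_gt (lt_of_le_of_lt (le_trans (le_of_lt hxy) hyb) hz))
            (ne_of_gt (lt_of_le_of_lt hyb hz))
      exact h2
  intro m h1m hmh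
  have e1 : σ (h - m + 1) = Equiv.swap (i m) (j m) * σ (h - m) := by
    have hfac : h - (h - m) = m := by omega
    have := hstep (h - m) (by omega)
    rwa [hfac] at this
  have fr : ∀ z : Fin n, z < a ∨ b < z → σ (h - m) z = z := by
    rcases Nat.eq_zero_or_pos (h - m) with h0 | h0
    · intro z hz; rw [h0, hσ0]; simp
    · intro z hz
      exact hfix m (by omega) z hz
  have fr1 : ∀ z : Fin n, z < a ∨ b < z → σ (h - m + 1) z = z := by
    have hd2 : h - (m - 1) = h - m + 1 := by omega
    intro z hz
    have := hfix (m - 1) (by omega) z hz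
    rwa [hd2] at this
  have tfix : ∀ z : Fin n, z < a ∨ b < z → Equiv.swap (i m) (j m) z = z := by
    intro z hz
    have h3 := fr z hz
    have h2 := fr1 z hz
    rw [e1, Equiv.Perm.mul_apply, h3] at h2
    exact h2
  have hij' := hij m h1m hmh
  constructor
  · by_contra hc
    rw [not_le] at hc
    have h4 := tfix (i m) (Or.inl hc)
    rw [Equiv.swap_apply_left] at h4
    exact absurd (h4 ▸ hij') (lt_irrefl _)
  · by_contra hc
    rw [not_le] at hc
    have h4 := tfix (j m) (Or.inr hc)
    rw [Equiv.swap_apply_right] at h4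
    exact absurd (h4 ▸ hij') (lt_irrefl _)
end

section
/- The left-reflection set of a reflection: for 1 ≤ a < b ≤ n, T_L((a b)) = {(a j) : a < j ≤ b} ∪ {(i b) : a < i < b}. -/
open Equiv

private lemma invNum_lt_of_inv {n : ℕ} (σ : Equiv.Perm (Fin n)) (x y : Fin n) (hxy : x < y)
    (h : σ⁻¹ y < σ⁻¹ x) : invNum (Equiv.swap x y * σ) < invNum σ := by
  set α := σ⁻¹ x with hα
  set β := σ⁻¹ y with hβ
  have hσα : σ α = x := σ.apply_symm_apply x
  have hσβ : σ β = y := σ.apply_symm_apply y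
  have hmul : Equiv.swap x y * σ = σ * Equiv.swap α β := by
    rw [Equiv.mul_swap_eq_swap_mul, hσα, hσβ]
  rw [hmul]
  simp only [invNum]
  set s := Equiv.swap α β with hs
  set A := Finset.univ.filter
    (fun p : Fin n × Fin n => p.1 < p.2 ∧ (σ * s) p.2 < (σ * s) p.1) with hAdef
  set B := Finset.univ.filter
    (fun p : Fin n × Fin n => p.1 < p.2 ∧ σ p.2 < σ p.1) with hBdef
  set φ : Fin n × Fin n → Fin n × Fin n :=
    fun p => if s p.1 < s p.2 then (s p.1, s p.2) else p with hφdef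
  have hφφ : ∀ p : Fin n × Fin n, p.1 < p.2 → φ (φ p) = p := by
    intro p hp
    by_cases h1 : s p.1 < s p.2
    · simp only [hφdef, if_pos h1]
      rw [if_pos]
      · simp [hs, Equiv.swap_apply_self]
      · simpa [hs, Equiv.swap_apply_self] using hp
    · simp only [hφdef, if_neg h1]
  have hmemA : ∀ p : Fin n × Fin n, p ∈ A → p.1 < p.2 ∧ σ (s p.2) < σ (s p.1) := by
    intro p hp
    have := (Finset.mem_filter.mp hp).2
    simpa [Equiv.Perm.mul_apply] using this
  have hβαB : (β, α) ∈ B := by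
    refine Finset.mem_filter.mpr ⟨Finset.mem_univ _, ⟨h, ?_⟩⟩
    rw [hσα, hσβ]; exact hxy
  have hsub : A.image φ ⊆ B.erase (β, α) := by
    intro q hq
    obtain ⟨p, hpA, rfl⟩ := Finset.mem_image.mp hq
    obtain ⟨hp12, hpσ⟩ := hmemA p hpA
    by_cases hlt : s p.1 < s p.2
    · simp only [hφdef, if_pos hlt]
      refine Finset.mem_erase.mpr ⟨?_, ?_⟩
      · intro he
        have h1 : s p.1 = β := congrArg Prod.fst he
        have h2 : s p.2 = α := congrArg Prod.snd he
        have e1 : p.1 = α := by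
          have := congrArg s h1
          simpa [hs, Equiv.swap_apply_self, Equiv.swap_apply_right] using this
        have e2 : p.2 = β := by
          have := congrArg s h2
          simpa [hs, Equiv.swap_apply_self, Equiv.swap_apply_left] using this
        rw [e1, e2] at hp12
        exact absurd hp12 (not_lt.mpr (le_of_lt h))
      · exact Finset.mem_filter.mpr ⟨Finset.mem_univ _, ⟨hlt, hpσ⟩⟩
    · simp only [hφdef, if_neg hlt]
      have hne : s p.2 ≠ s p.1 := fun e => (ne_of_lt hp12).symm (s.injective e)
      have hslt : s p.2 < s p.1 := lt_of_le_of_ne (not_lt.mp hlt) hne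
      obtain ⟨i, j⟩ := p
      simp only at hp12 hpσ hslt ⊢
      by_cases hiα : i = α
      · exfalso
        subst hiα
        have hsj : j ≠ α := fun e => (ne_of_lt hp12) e.symm
        by_cases hjβ : j = β
        · subst hjβ
          rw [Equiv.swap_apply_left, Equiv.swap_apply_right] at hslt
          exact absurd hslt (not_lt.mpr (le_of_lt h))
        · rw [Equiv.swap_apply_left, Equiv.swap_apply_of_ne_of_ne hsj hjβ] at hslt
          exact absurd (lt_trans h hp12) (not_lt.mpr (le_of_lt hslt))
      · by_cases hiβ : i = β
        · subst hiβ
          by_cases hjα : j = α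
          · exfalso
            subst hjα
            rw [Equiv.swap_apply_left, Equiv.swap_apply_right] at hpσ
            rw [hσα, hσβ] at hpσ
            exact absurd hpσ (not_lt.mpr (le_of_lt hxy))
          · have hjβ : j ≠ β := fun e => (ne_of_lt hp12).symm e
            refine Finset.mem_erase.mpr ⟨?_, ?_⟩
            · intro he
              exact hjα (congrArg Prod.snd he)
            · refine Finset.mem_filter.mpr ⟨Finset.mem_univ _, ⟨hp12, ?_⟩⟩
              rw [Equiv.swap_apply_right, Equiv.swap_apply_of_ne_of_ne hjα hjβ] at hpσ
              rw [hσα] at hpσ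
              rw [hσβ]
              exact lt_trans hpσ hxy
        · have hsi : s i = i := Equiv.swap_apply_of_ne_of_ne hiα hiβ
          by_cases hjα : j = α
          · subst hjα
            refine Finset.mem_erase.mpr ⟨?_, ?_⟩
            · intro he
              exact hiβ (congrArg Prod.fst he)
            · refine Finset.mem_filter.mpr ⟨Finset.mem_univ _, ⟨hp12, ?_⟩⟩
              rw [Equiv.swap_apply_left, hσβ, hsi] at hpσ
              rw [hσα]
              exact lt_trans hxy hpσ
          · exfalso
            by_cases hjβ : j = β
            · subst hjβ
              rw [Equiv.swap_apply_right, hsi] at hslt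
              exact absurd (lt_trans h (lt_trans hslt hp12)) (lt_irrefl β)
            · rw [Equiv.swap_apply_of_ne_of_ne hjα hjβ, hsi] at hslt
              exact absurd (lt_trans hslt hp12) (lt_irrefl j)
  have hinj : Set.InjOn φ ↑A := by
    intro p hp q hq he
    have hp' := (hmemA p hp).1
    have hq' := (hmemA q hq).1
    calc p = φ (φ p) := (hφφ p hp').symm
      _ = φ (φ q) := by rw [he]
      _ = q := hφφ q hq'
  calc A.card = (A.image φ).card := (Finset.card_image_of_injOn hinj).symm
    _ ≤ (B.erase (β, α)).card := Finset.card_le_card hsub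
    _ < B.card := Finset.card_erase_lt_of_mem hβαB

private lemma invNum_swap_mul_lt_iff {n : ℕ} (σ : Equiv.Perm (Fin n)) (x y : Fin n)
    (hxy : x < y) : invNum (Equiv.swap x y * σ) < invNum σ ↔ σ⁻¹ y < σ⁻¹ x := by
  constructor
  · intro hlt
    rcases lt_trichotomy (σ⁻¹ y) (σ⁻¹ x) with h | h | h
    · exact h
    · exact absurd (σ⁻¹.injective h) (ne_of_lt hxy).symm
    · exfalso
      have key : (Equiv.swap x y * σ)⁻¹ y < (Equiv.swap x y * σ)⁻¹ x := by
        simp only [mul_inv_rev, Equiv.swap_inv, Equiv.Perm.mul_apply,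
          Equiv.swap_apply_left, Equiv.swap_apply_right]
        exact h
      have := invNum_lt_of_inv (Equiv.swap x y * σ) x y hxy key
      rw [Equiv.swap_mul_self_mul] at this
      exact absurd hlt (not_lt.mpr (le_of_lt this))
  · exact invNum_lt_of_inv σ x y hxy

private lemma helper_mem {n : ℕ} (a b : Fin n) (hab : a < b) (x y : Fin n) (hxy : x < y)
    (hlt : invNum (Equiv.swap x y * Equiv.swap a b) < invNum (Equiv.swap a b)) :
    (∃ j : Fin n, a < j ∧ j ≤ b ∧ Equiv.swap x y = Equiv.swap a j) ∨
    (∃ i : Fin n, a < i ∧ i < b ∧ Equiv.swap x y = Equiv.swap i b) := by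
  rw [invNum_swap_mul_lt_iff _ _ _ hxy, Equiv.swap_inv] at hlt
  by_cases hxa : x = a
  · subst hxa
    left
    refine ⟨y, hxy, ?_, rfl⟩
    rw [Equiv.swap_apply_left] at hlt
    by_cases hyb : y = b
    · exact le_of_eq hyb
    · rw [Equiv.swap_apply_of_ne_of_ne (ne_of_gt hxy) hyb] at hlt
      exact le_of_lt hlt
  · by_cases hyb : y = b
    · right
      have hxb : x ≠ b := ne_of_lt (hyb ▸ hxy)
      rw [hyb, Equiv.swap_apply_right, Equiv.swap_apply_of_ne_of_ne hxa hxb] at hlt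
      exact ⟨x, hlt, hyb ▸ hxy, by rw [hyb]⟩
    · exfalso
      by_cases hxb : x = b
      · subst hxb
        have hya : y ≠ a := ne_of_gt (lt_trans hab hxy)
        rw [Equiv.swap_apply_right, Equiv.swap_apply_of_ne_of_ne hya hyb] at hlt
        exact absurd (lt_trans hab (lt_trans hxy hlt)) (lt_irrefl a)
      · by_cases hya : y = a
        · subst hya
          have hxb' : x ≠ b := ne_of_lt (lt_trans hxy hab)
          rw [Equiv.swap_apply_left, Equiv.swap_apply_of_ne_of_ne hxa hxb'] at hlt
          exact absurd (lt_trans hxy (lt_trans hab hlt)) (lt_irrefl x)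
        · rw [Equiv.swap_apply_of_ne_of_ne hya hyb,
            Equiv.swap_apply_of_ne_of_ne hxa hxb] at hlt
          exact absurd (lt_trans hxy hlt) (lt_irrefl x)

/-- `T_L((a b)) = {(a j) : a < j ≤ b} ∪ {(i b) : a < i < b}`. -/
theorem TL_swap_eq {n : ℕ} (a b : Fin n) (hab : a < b) :
    TL (Equiv.swap a b) =
      {t | ∃ j : Fin n, a < j ∧ j ≤ b ∧ t = Equiv.swap a j} ∪
      {t | ∃ i : Fin n, a < i ∧ i < b ∧ t = Equiv.swap i b} := by
  ext t
  constructor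
  · rintro ⟨⟨x, y, hne, rfl⟩, hlt⟩
    rcases hne.lt_or_gt with hxy | hyx
    · exact helper_mem a b hab x y hxy hlt
    · rw [Equiv.swap_comm] at hlt ⊢
      exact helper_mem a b hab y x hyx hlt
  · rintro (⟨j, haj, hjb, rfl⟩ | ⟨i, hai, hib, rfl⟩)
    · refine ⟨⟨a, j, ne_of_lt haj, rfl⟩, ?_⟩
      rw [invNum_swap_mul_lt_iff _ _ _ haj, Equiv.swap_inv]
      rcases eq_or_lt_of_le hjb with rfl | hjb'
      · rw [Equiv.swap_apply_right, Equiv.swap_apply_left]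
        exact haj
      · rw [Equiv.swap_apply_left,
          Equiv.swap_apply_of_ne_of_ne (ne_of_gt haj) (ne_of_lt hjb')]
        exact hjb'
    · refine ⟨⟨i, b, ne_of_lt hib, rfl⟩, ?_⟩
      rw [invNum_swap_mul_lt_iff _ _ _ hib, Equiv.swap_inv]
      rw [Equiv.swap_apply_right,
        Equiv.swap_apply_of_ne_of_ne (ne_of_gt hai) (ne_of_lt hib)]
      exact hai
end

section
/- Let σ, τ ∈ S_n and let t = (a b) be a transposition with ℓ(t·(σ ∨_R τ)) < ℓ(σ ∨_R τ). Then there exist transpositions t_1, ..., t_m, each lying in T_L(σ) ∪ T_L(τ), such that t = t_m ··· t_1 and the lengths of the partial products strictly increase: ℓ(t_1) < ℓ(t_2 t_1) < ... < ℓ(t_m ··· t_1). -/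
open Equiv

/-- The partial product `t_r t_{r-1} ⋯ t_1`. -/
def partialProd {n : ℕ} (ts : ℕ → Equiv.Perm (Fin n)) (r : ℕ) : Equiv.Perm (Fin n) :=
  ((List.range r).map (fun m => ts (r - m))).prod

/-- `t` is reachable by a `(σ,τ)`-Bruhat path from the identity: `t = t_m ⋯ t_1`
with all `t_r ∈ T_L(σ) ∪ T_L(τ)` and strictly increasing partial lengths. -/
def BruhatReachable {n : ℕ} (σ τ t : Equiv.Perm (Fin n)) : Prop :=
  ∃ m : ℕ, 1 ≤ m ∧ ∃ ts : ℕ → Equiv.Perm (Fin n),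
    (∀ r, 1 ≤ r → r ≤ m → ts r ∈ TL σ ∪ TL τ) ∧
    t = partialProd ts m ∧
    ∀ r, 1 ≤ r → r < m → invNum (partialProd ts r) < invNum (partialProd ts (r + 1))


section Aux

open Equiv Finset

lemma partialProd_succ {n : ℕ} (ts : ℕ → Equiv.Perm (Fin n)) (r : ℕ) :
    partialProd ts (r+1) = ts (r+1) * partialProd ts r := by
  unfold partialProd
  rw [List.range_succ_eq_map, List.map_cons, List.prod_cons, List.map_map]
  congr 2
  exact List.map_congr_left (fun m _ => by simp [Function.comp, Nat.succ_sub_succ])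

lemma partialProd_zero {n : ℕ} (ts : ℕ → Equiv.Perm (Fin n)) : partialProd ts 0 = 1 := rfl

lemma invNum_lt_of_ord {n : ℕ} (π : Equiv.Perm (Fin n)) {x y : Fin n} (hxy : x < y)
    (h : π⁻¹ x < π⁻¹ y) : invNum π < invNum (Equiv.swap x y * π) := by
  classical
  set px := π⁻¹ x with hpxd
  set py := π⁻¹ y with hpyd
  have hπpx : π px = x := by simp [hpxd]
  have hπpy : π py = y := by simp [hpyd]
  have hxny : x ≠ y := ne_of_lt hxy
  set t := Equiv.swap x y with htd
  have tx : t x = y := Equiv.swap_apply_left x y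
  have ty : t y = x := Equiv.swap_apply_right x y
  have tz : ∀ z, z ≠ x → z ≠ y → t z = z := fun z h1 h2 => Equiv.swap_apply_of_ne_of_ne h1 h2
  set A := Finset.univ.filter (fun p : Fin n × Fin n => p.1 < p.2 ∧ π p.2 < π p.1) with hA
  set B := Finset.univ.filter (fun p : Fin n × Fin n => p.1 < p.2 ∧ (t * π) p.2 < (t * π) p.1) with hB
  have hnotmem : (px, py) ∉ A := by
    simp only [hA, Finset.mem_filter]
    rintro ⟨-, -, hlt⟩
    rw [hπpx, hπpy] at hlt
    exact absurd hxy (not_lt.mpr hlt.le)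
  set S := insert (px, py) A with hS
  have hcardS : S.card = invNum π + 1 := by
    rw [hS, Finset.card_insert_of_notMem hnotmem]; rfl
  set F : Fin n × Fin n → Fin n × Fin n := fun p =>
    if π p.2 = x ∧ π p.1 < y then (p.1, py)
    else if π p.1 = y ∧ x < π p.2 then (px, p.2) else p with hF
  have hmem : ∀ p : Fin n × Fin n, p ∈ S → p = (px, py) ∨ (p.1 < p.2 ∧ π p.2 < π p.1) := by
    intro p hp
    rcases Finset.mem_insert.mp hp with h1 | h1
    · exact Or.inl h1
    · right; simpa [hA] using h1
  -- maps to
  have hmaps : ∀ p ∈ S, F p ∈ B := by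
    intro p hp
    rcases hmem p hp with rfl | ⟨hij, hinv⟩
    · have : F (px, py) = (px, py) := by
        simp only [hF]
        rw [if_neg, if_neg]
        · rintro ⟨h1, -⟩; rw [hπpx] at h1; exact hxny h1
        · rintro ⟨h1, -⟩; rw [hπpy] at h1; exact hxny h1.symm
      rw [this]
      simp only [hB, Finset.mem_filter, Finset.mem_univ, true_and]
      refine ⟨h, ?_⟩
      simp only [Equiv.Perm.mul_apply, hπpx, hπpy, tx, ty]
      exact hxy
    · by_cases hc1 : π p.2 = x ∧ π p.1 < y
      · have hp2 : p.2 = px := π.injective (by rw [hc1.1, hπpx])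
        have hxlt : x < π p.1 := hc1.1 ▸ hinv
        have hFp : F p = (p.1, py) := by simp only [hF, if_pos hc1]
        rw [hFp]
        simp only [hB, Finset.mem_filter, Finset.mem_univ, true_and]
        constructor
        · exact lt_trans (hp2 ▸ hij) h
        · simp only [Equiv.Perm.mul_apply, hπpy, ty]
          rw [tz (π p.1) (ne_of_gt hxlt) (ne_of_lt hc1.2)]
          exact hxlt
      · by_cases hc2 : π p.1 = y ∧ x < π p.2
        · have hp1 : p.1 = py := π.injective (by rw [hc2.1, hπpy])
          have hlty : π p.2 < y := hc2.1 ▸ hinv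
          have hFp : F p = (px, p.2) := by simp only [hF, if_neg hc1, if_pos hc2]
          rw [hFp]
          simp only [hB, Finset.mem_filter, Finset.mem_univ, true_and]
          constructor
          · exact lt_trans h (hp1 ▸ hij)
          · simp only [Equiv.Perm.mul_apply, hπpx, tx]
            rw [tz (π p.2) (ne_of_gt hc2.2) (ne_of_lt hlty)]
            exact hlty
        · have hFp : F p = p := by simp only [hF, if_neg hc1, if_neg hc2]
          rw [hFp]
          simp only [hB, Finset.mem_filter, Finset.mem_univ, true_and]
          refine ⟨hij, ?_⟩
          simp only [Equiv.Perm.mul_apply]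
          by_cases hvx : π p.2 = x
          · -- then ¬(π p.1 < y) since hc1 fails
            have huy : π p.1 ≠ y := by
              intro he
              have h1 : p.1 = py := π.injective (by rw [he, hπpy])
              have h2 : p.2 = px := π.injective (by rw [hvx, hπpx])
              rw [h1, h2] at hij
              exact absurd (lt_trans hij h) (lt_irrefl _)
            have hyu : y < π p.1 := by
              rcases lt_or_ge (π p.1) y with h1 | h1
              · exact absurd ⟨hvx, h1⟩ hc1
              · exact lt_of_le_of_ne h1 (Ne.symm huy)
            rw [hvx, tx, tz (π p.1) (ne_of_gt (lt_trans hxy hyu)) (ne_of_gt hyu)]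
            exact hyu
          · by_cases hvy : π p.2 = y
            · have hyu : y < π p.1 := hvy ▸ hinv
              rw [hvy, ty, tz (π p.1) (ne_of_gt (lt_trans hxy hyu)) (ne_of_gt hyu)]
              exact lt_trans hxy hyu
            · by_cases hux : π p.1 = x
              · have hvlt : π p.2 < x := hux ▸ hinv
                rw [hux, tx, tz (π p.2) hvx hvy]
                exact lt_trans hvlt hxy
              · by_cases huy : π p.1 = y
                · have hvlex : ¬ (x < π p.2) := fun hc => hc2 ⟨huy, hc⟩
                  have hvltx : π p.2 < x := lt_of_le_of_ne (not_lt.mp hvlex) hvx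
                  rw [huy, ty, tz (π p.2) hvx hvy]
                  exact hvltx
                · rw [tz (π p.1) hux huy, tz (π p.2) hvx hvy]
                  exact hinv
  have m1 : ∀ p ∈ S, (π p.2 = x ∧ π p.1 < y) → p.2 = px ∧ p.1 < px ∧ x < π p.1 := by
    intro p hp hc
    rcases hmem p hp with rfl | ⟨hij, hinv⟩
    · exfalso; have h1 := hc.1; rw [hπpy] at h1; exact hxny h1.symm
    · have hp2 : p.2 = px := π.injective (by rw [hc.1, hπpx])
      exact ⟨hp2, hp2 ▸ hij, hc.1 ▸ hinv⟩
  have m2 : ∀ p ∈ S, (π p.1 = y ∧ x < π p.2) → p.1 = py ∧ py < p.2 ∧ π p.2 < y := by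
    intro p hp hc
    rcases hmem p hp with rfl | ⟨hij, hinv⟩
    · exfalso; have h1 := hc.1; rw [hπpx] at h1; exact hxny h1
    · have hp1 : p.1 = py := π.injective (by rw [hc.1, hπpy])
      exact ⟨hp1, hp1 ▸ hij, hc.1 ▸ hinv⟩
  have hinj : Set.InjOn F ↑S := by
    intro p hp q hq heq
    by_cases c1p : π p.2 = x ∧ π p.1 < y
    · obtain ⟨hp2, hp1, hpx1⟩ := m1 p hp c1p
      rw [show F p = (p.1, py) by simp only [hF, if_pos c1p]] at heq
      by_cases c1q : π q.2 = x ∧ π q.1 < y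
      · obtain ⟨hq2, hq1, hqx1⟩ := m1 q hq c1q
        rw [show F q = (q.1, py) by simp only [hF, if_pos c1q]] at heq
        have h1 : p.1 = q.1 := (Prod.ext_iff.mp heq).1
        exact Prod.ext h1 (hp2.trans hq2.symm)
      · by_cases c2q : π q.1 = y ∧ x < π q.2
        · obtain ⟨hq1, hq2, hqlt⟩ := m2 q hq c2q
          rw [show F q = (px, q.2) by simp only [hF, if_neg c1q, if_pos c2q]] at heq
          have h1 : p.1 = px := (Prod.ext_iff.mp heq).1
          exact absurd (h1 ▸ hp1) (lt_irrefl _)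
        · rw [show F q = q by simp only [hF, if_neg c1q, if_neg c2q]] at heq
          exfalso
          rcases hmem q hq with h1 | ⟨hij, hinv⟩
          · rw [← heq] at h1
            have := congrArg Prod.fst h1
            simp only at this
            exact absurd (this ▸ hp1) (lt_irrefl _)
          · rw [← heq] at hinv
            simp only [hπpy] at hinv
            exact absurd (lt_trans hinv c1p.2) (lt_irrefl _)
    · by_cases c2p : π p.1 = y ∧ x < π p.2
      · obtain ⟨hp1, hp2gt, hplt⟩ := m2 p hp c2p
        rw [show F p = (px, p.2) by simp only [hF, if_neg c1p, if_pos c2p]] at heq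
        by_cases c1q : π q.2 = x ∧ π q.1 < y
        · obtain ⟨hq2, hq1, hqx1⟩ := m1 q hq c1q
          rw [show F q = (q.1, py) by simp only [hF, if_pos c1q]] at heq
          have h1 : px = q.1 := (Prod.ext_iff.mp heq).1
          exact absurd (h1 ▸ hq1) (lt_irrefl _)
        · by_cases c2q : π q.1 = y ∧ x < π q.2
          · obtain ⟨hq1, hq2gt, hqlt⟩ := m2 q hq c2q
            rw [show F q = (px, q.2) by simp only [hF, if_neg c1q, if_pos c2q]] at heq
            have h2 : p.2 = q.2 := (Prod.ext_iff.mp heq).2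
            exact Prod.ext (hp1.trans hq1.symm) h2
          · rw [show F q = q by simp only [hF, if_neg c1q, if_neg c2q]] at heq
            exfalso
            rcases hmem q hq with h1 | ⟨hij, hinv⟩
            · rw [← heq] at h1
              have := congrArg Prod.snd h1
              simp only at this
              exact absurd (this ▸ hp2gt) (lt_irrefl _)
            · rw [← heq] at hinv
              simp only [hπpx] at hinv
              exact absurd (lt_trans hinv c2p.2) (lt_irrefl _)
      · rw [show F p = p by simp only [hF, if_neg c1p, if_neg c2p]] at heq
        by_cases c1q : π q.2 = x ∧ π q.1 < y
        · obtain ⟨hq2, hq1, hqx1⟩ := m1 q hq c1q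
          rw [show F q = (q.1, py) by simp only [hF, if_pos c1q]] at heq
          exfalso
          rcases hmem p hp with h1 | ⟨hij, hinv⟩
          · rw [heq] at h1
            have := congrArg Prod.fst h1
            simp only at this
            exact absurd (this ▸ hq1) (lt_irrefl _)
          · rw [heq] at hinv
            simp only [hπpy] at hinv
            have h3 : π q.1 < y := c1q.2
            simp only [heq] at *
            exact absurd (lt_trans hinv h3) (lt_irrefl _)
        · by_cases c2q : π q.1 = y ∧ x < π q.2
          · obtain ⟨hq1, hq2gt, hqlt⟩ := m2 q hq c2q
            rw [show F q = (px, q.2) by simp only [hF, if_neg c1q, if_pos c2q]] at heq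
            exfalso
            rcases hmem p hp with h1 | ⟨hij, hinv⟩
            · rw [heq] at h1
              have := congrArg Prod.snd h1
              simp only at this
              exact absurd (this ▸ hq2gt) (lt_irrefl _)
            · rw [heq] at hinv
              simp only [hπpx] at hinv
              exact absurd (lt_trans hinv c2q.2) (lt_irrefl _)
          · rw [show F q = q by simp only [hF, if_neg c1q, if_neg c2q]] at heq
            exact heq
  have hle : S.card ≤ B.card := Finset.card_le_card_of_injOn F hmaps hinj
  have hBc : invNum (t * π) = B.card := rfl
  omega

lemma invNum_swap_mul_lt {n : ℕ} (π : Equiv.Perm (Fin n)) {x y : Fin n} (hxy : x < y)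
    (h : π⁻¹ y < π⁻¹ x) : invNum (Equiv.swap x y * π) < invNum π := by
  have h2 : (Equiv.swap x y * π)⁻¹ x < (Equiv.swap x y * π)⁻¹ y := by
    simp only [mul_inv_rev, Equiv.Perm.mul_apply]
    rw [show (Equiv.swap x y)⁻¹ = Equiv.swap x y from Equiv.swap_inv x y,
      Equiv.swap_apply_left, Equiv.swap_apply_right]
    exact h
  have key := invNum_lt_of_ord (Equiv.swap x y * π) hxy h2
  rwa [← mul_assoc, Equiv.swap_mul_self, one_mul] at key

lemma invNum_inv {n : ℕ} (π : Equiv.Perm (Fin n)) : invNum π⁻¹ = invNum π := by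
  classical
  unfold invNum
  apply Finset.card_bij' (fun p _ => ((π⁻¹ p.2 : Fin n), (π⁻¹ p.1 : Fin n)))
    (fun q _ => ((π q.2 : Fin n), (π q.1 : Fin n)))
  · intro p hp
    simp only [Finset.mem_filter, Finset.mem_univ, true_and] at hp ⊢
    exact ⟨hp.2, by simp [hp.1]⟩
  · intro q hq
    simp only [Finset.mem_filter, Finset.mem_univ, true_and] at hq ⊢
    exact ⟨hq.2, by simp [hq.1]⟩
  · intro p hp; simp
  · intro q hq; simp

lemma invNum_mul_eq_sdiff {n : ℕ} (u v : Equiv.Perm (Fin n)) :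
    invNum (u⁻¹ * v) =
      ((Finset.univ.filter (fun p : Fin n × Fin n => p.1 < p.2 ∧ u⁻¹ p.2 < u⁻¹ p.1)) \
       (Finset.univ.filter (fun p : Fin n × Fin n => p.1 < p.2 ∧ v⁻¹ p.2 < v⁻¹ p.1))).card +
      ((Finset.univ.filter (fun p : Fin n × Fin n => p.1 < p.2 ∧ v⁻¹ p.2 < v⁻¹ p.1)) \
       (Finset.univ.filter (fun p : Fin n × Fin n => p.1 < p.2 ∧ u⁻¹ p.2 < u⁻¹ p.1))).card := by
  classical
  set A := Finset.univ.filter (fun p : Fin n × Fin n => p.1 < p.2 ∧ u⁻¹ p.2 < u⁻¹ p.1) with hA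
  set B := Finset.univ.filter (fun p : Fin n × Fin n => p.1 < p.2 ∧ v⁻¹ p.2 < v⁻¹ p.1) with hB
  have hd : Disjoint (A \ B) (B \ A) := disjoint_sdiff_sdiff
  rw [← Finset.card_union_of_disjoint hd]
  unfold invNum
  apply Finset.card_bij'
    (i := fun q _ => if (v q.1 : Fin n) < v q.2 then ((v q.1 : Fin n), (v q.2 : Fin n))
      else ((v q.2 : Fin n), (v q.1 : Fin n)))
    (j := fun p _ => if (v⁻¹ p.1 : Fin n) < v⁻¹ p.2 then ((v⁻¹ p.1 : Fin n), (v⁻¹ p.2 : Fin n))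
      else ((v⁻¹ p.2 : Fin n), (v⁻¹ p.1 : Fin n)))
  · -- maps into union
    intro q hq
    simp only [Finset.mem_filter, Finset.mem_univ, true_and] at hq
    simp only [Equiv.Perm.mul_apply] at hq
    obtain ⟨h12, hinv⟩ := hq
    by_cases hv : (v q.1 : Fin n) < v q.2
    · rw [if_pos hv]
      apply Finset.mem_union_left
      rw [Finset.mem_sdiff]
      constructor
      · simp only [hA, Finset.mem_filter, Finset.mem_univ, true_and]
        exact ⟨hv, by simpa using hinv⟩
      · simp only [hB, Finset.mem_filter, Finset.mem_univ, true_and]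
        rintro ⟨-, hlt⟩
        simp only [Equiv.Perm.coe_inv, Equiv.symm_apply_apply] at hlt
        exact absurd h12 (not_lt.mpr hlt.le)
    · have hv' : (v q.2 : Fin n) < v q.1 := by
        rcases lt_or_eq_of_le (not_lt.mp hv) with h | h
        · exact h
        · exact absurd (v.injective h) (ne_of_gt h12)
      rw [if_neg hv]
      apply Finset.mem_union_right
      rw [Finset.mem_sdiff]
      constructor
      · simp only [hB, Finset.mem_filter, Finset.mem_univ, true_and]
        exact ⟨hv', by simpa using h12⟩
      · simp only [hA, Finset.mem_filter, Finset.mem_univ, true_and]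
        rintro ⟨-, hlt⟩
        exact absurd (lt_trans hlt (by simpa using hinv)) (lt_irrefl _)
  · -- j maps into filter
    intro p hp
    rcases Finset.mem_union.mp hp with h | h <;> rw [Finset.mem_sdiff] at h
    · obtain ⟨hAm, hBm⟩ := h
      simp only [hA, Finset.mem_filter, Finset.mem_univ, true_and] at hAm
      simp only [hB, Finset.mem_filter, Finset.mem_univ, true_and] at hBm
      have hvord : (v⁻¹ p.1 : Fin n) < v⁻¹ p.2 := by
        rcases lt_trichotomy ((v⁻¹ p.1 : Fin n)) (v⁻¹ p.2) with h | h | h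
        · exact h
        · exact absurd (v⁻¹.injective h) (ne_of_lt hAm.1)
        · exact absurd ⟨hAm.1, h⟩ hBm
      rw [if_pos hvord]
      simp only [Finset.mem_filter, Finset.mem_univ, true_and]
      simp only [Equiv.Perm.mul_apply]
      refine ⟨hvord, ?_⟩
      simp only [Equiv.Perm.coe_inv, Equiv.apply_symm_apply]
      exact hAm.2
    · obtain ⟨hBm, hAm⟩ := h
      simp only [hB, Finset.mem_filter, Finset.mem_univ, true_and] at hBm
      simp only [hA, Finset.mem_filter, Finset.mem_univ, true_and] at hAm
      have hvord : ¬ ((v⁻¹ p.1 : Fin n) < v⁻¹ p.2) := not_lt.mpr hBm.2.le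
      rw [if_neg hvord]
      simp only [Finset.mem_filter, Finset.mem_univ, true_and]
      simp only [Equiv.Perm.mul_apply]
      refine ⟨hBm.2, ?_⟩
      simp only [Equiv.Perm.coe_inv, Equiv.apply_symm_apply]
      rcases lt_trichotomy (u⁻¹ p.2) (u⁻¹ p.1) with h | h | h
      · exact absurd ⟨hBm.1, h⟩ hAm
      · exact absurd (u⁻¹.injective h) (ne_of_gt hBm.1)
      · exact h
  · intro q hq
    simp only [Finset.mem_filter, Finset.mem_univ, true_and] at hq
    by_cases hv : (v q.1 : Fin n) < v q.2
    · rw [if_pos hv]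
      have h2 : (v⁻¹ (v q.1) : Fin n) < v⁻¹ (v q.2) := by simpa using hq.1
      rw [if_pos h2]
      exact Prod.ext (by simp) (by simp)
    · rw [if_neg hv]
      have h2 : ¬ ((v⁻¹ (v q.2) : Fin n) < v⁻¹ (v q.1)) := by
        simpa using not_lt.mpr hq.1.le
      rw [if_neg h2]
      exact Prod.ext (by simp) (by simp)
  · intro p hp
    rcases Finset.mem_union.mp hp with h | h <;> rw [Finset.mem_sdiff] at h
    · obtain ⟨hAm, hBm⟩ := h
      simp only [hA, Finset.mem_filter, Finset.mem_univ, true_and] at hAm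
      simp only [hB, Finset.mem_filter, Finset.mem_univ, true_and] at hBm
      have hvord : (v⁻¹ p.1 : Fin n) < v⁻¹ p.2 := by
        rcases lt_trichotomy ((v⁻¹ p.1 : Fin n)) (v⁻¹ p.2) with h | h | h
        · exact h
        · exact absurd (v⁻¹.injective h) (ne_of_lt hAm.1)
        · exact absurd ⟨hAm.1, h⟩ hBm
      rw [if_pos hvord]
      have h2 : (v (v⁻¹ p.1) : Fin n) < v (v⁻¹ p.2) := by simpa using hAm.1
      rw [if_pos h2]
      exact Prod.ext (by simp) (by simp)
    · obtain ⟨hBm, hAm⟩ := h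
      simp only [hB, Finset.mem_filter, Finset.mem_univ, true_and] at hBm
      have hvord : ¬ ((v⁻¹ p.1 : Fin n) < v⁻¹ p.2) := not_lt.mpr hBm.2.le
      rw [if_neg hvord]
      have h2 : ¬ ((v (v⁻¹ p.2) : Fin n) < v (v⁻¹ p.1)) := by
        simpa using not_lt.mpr hBm.1.le
      rw [if_neg h2]
      exact Prod.ext (by simp) (by simp)

lemma wleR_iff {n : ℕ} (u v : Equiv.Perm (Fin n)) :
    wleR u v ↔ ∀ x y : Fin n, x < y → u⁻¹ y < u⁻¹ x → v⁻¹ y < v⁻¹ x := by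
  classical
  set A := Finset.univ.filter (fun p : Fin n × Fin n => p.1 < p.2 ∧ u⁻¹ p.2 < u⁻¹ p.1) with hA
  set B := Finset.univ.filter (fun p : Fin n × Fin n => p.1 < p.2 ∧ v⁻¹ p.2 < v⁻¹ p.1) with hB
  have hu : invNum u = A.card := by rw [← invNum_inv]; rfl
  have hv : invNum v = B.card := by rw [← invNum_inv]; rfl
  have hm : invNum (u⁻¹ * v) = (A \ B).card + (B \ A).card := invNum_mul_eq_sdiff u v
  have hA1 : (A \ B).card + (A ∩ B).card = A.card := Finset.card_sdiff_add_card_inter A B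
  have hB1 : (B \ A).card + (B ∩ A).card = B.card := Finset.card_sdiff_add_card_inter B A
  have hBA : (A ∩ B).card = (B ∩ A).card := by rw [Finset.inter_comm]
  constructor
  · intro hw x y hxy hlt
    have hcard : (A \ B).card = 0 := by
      unfold wleR at hw
      omega
    have hsub : A ⊆ B := by
      intro p hp
      by_contra hpb
      have : p ∈ A \ B := Finset.mem_sdiff.mpr ⟨hp, hpb⟩
      exact absurd (Finset.card_eq_zero.mp hcard ▸ this) (Finset.notMem_empty p)
    have hpa : (x, y) ∈ A := by
      simp only [hA, Finset.mem_filter, Finset.mem_univ, true_and]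
      exact ⟨hxy, hlt⟩
    have := hsub hpa
    simp only [hB, Finset.mem_filter, Finset.mem_univ, true_and] at this
    exact this.2
  · intro hall
    have hsub : A ⊆ B := by
      intro p hp
      simp only [hA, Finset.mem_filter, Finset.mem_univ, true_and] at hp
      simp only [hB, Finset.mem_filter, Finset.mem_univ, true_and]
      exact ⟨hp.1, hall _ _ hp.1 hp.2⟩
    have h0 : (A \ B).card = 0 := by
      rw [Finset.card_eq_zero, Finset.sdiff_eq_empty_iff_subset]
      exact hsub
    unfold wleR
    omega

/-- The union relation whose transitive closure is the inversion relation of the join. -/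
def relST {n : ℕ} (σ τ : Equiv.Perm (Fin n)) (x y : Fin n) : Prop :=
  x < y ∧ (σ⁻¹ y < σ⁻¹ x ∨ τ⁻¹ y < τ⁻¹ x)

lemma relST_lt {n : ℕ} {σ τ : Equiv.Perm (Fin n)} {x y : Fin n} (h : relST σ τ x y) : x < y := h.1

lemma transGen_lt {n : ℕ} {σ τ : Equiv.Perm (Fin n)} {x y : Fin n}
    (h : Relation.TransGen (relST σ τ) x y) : x < y := by
  induction h with
  | single h => exact h.1
  | tail _ h ih => exact lt_trans ih h.1

lemma relST_split {n : ℕ} {σ τ : Equiv.Perm (Fin n)} {u w y : Fin n}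
    (h : relST σ τ u w) (h1 : u < y) (h2 : y < w) : relST σ τ u y ∨ relST σ τ y w := by
  rcases h.2 with hσ | hσ
  · rcases lt_trichotomy (σ⁻¹ y) (σ⁻¹ u) with hc | hc | hc
    · exact Or.inl ⟨h1, Or.inl hc⟩
    · exact absurd (σ⁻¹.injective hc) (ne_of_gt h1)
    · exact Or.inr ⟨h2, Or.inl (lt_trans hσ hc)⟩
  · rcases lt_trichotomy (τ⁻¹ y) (τ⁻¹ u) with hc | hc | hc
    · exact Or.inl ⟨h1, Or.inr hc⟩
    · exact absurd (τ⁻¹.injective hc) (ne_of_gt h1)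
    · exact Or.inr ⟨h2, Or.inr (lt_trans hσ hc)⟩

lemma transGen_cotrans {n : ℕ} {σ τ : Equiv.Perm (Fin n)} {x z : Fin n}
    (h : Relation.TransGen (relST σ τ) x z) : ∀ y, x < y → y < z →
      Relation.TransGen (relST σ τ) x y ∨ Relation.TransGen (relST σ τ) y z := by
  induction h with
  | single h =>
    intro y h1 h2
    rcases relST_split h h1 h2 with h3 | h3
    · exact Or.inl (Relation.TransGen.single h3)
    · exact Or.inr (Relation.TransGen.single h3)
  | @tail c z hxc hcz ih =>
    intro y h1 h2
    rcases lt_trichotomy y c with hyc | hyc | hyc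
    · rcases ih y h1 hyc with h3 | h3
      · exact Or.inl h3
      · exact Or.inr (Relation.TransGen.tail h3 hcz)
    · exact Or.inl (hyc ▸ hxc)
    · rcases relST_split hcz hyc h2 with h3 | h3
      · exact Or.inl (Relation.TransGen.tail hxc h3)
      · exact Or.inr (Relation.TransGen.single h3)

lemma exists_realizer {n : ℕ} (σ τ : Equiv.Perm (Fin n)) :
    ∃ z : Equiv.Perm (Fin n), ∀ x y : Fin n, x < y →
      (z⁻¹ y < z⁻¹ x ↔ Relation.TransGen (relST σ τ) x y) := by
  classical
  set R : Fin n → Fin n → Prop := Relation.TransGen (relST σ τ) with hR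
  set L : Fin n → Fin n → Prop := fun x y => (x < y ∧ ¬ R x y) ∨ (y < x ∧ R y x) with hL
  have Lirr : ∀ a, ¬ L a a := by
    intro a h
    rcases h with ⟨h1, -⟩ | ⟨h1, -⟩ <;> exact lt_irrefl _ h1
  have Ltot : ∀ a b : Fin n, a ≠ b → L a b ∨ L b a := by
    intro a b hne
    rcases lt_trichotomy a b with h | h | h
    · by_cases hr : R a b
      · exact Or.inr (Or.inr ⟨h, hr⟩)
      · exact Or.inl (Or.inl ⟨h, hr⟩)
    · exact absurd h hne
    · by_cases hr : R b a
      · exact Or.inl (Or.inr ⟨h, hr⟩)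
      · exact Or.inr (Or.inl ⟨h, hr⟩)
  have Ltrans : ∀ a b c : Fin n, L a b → L b c → L a c := by
    intro u x y hux hxy
    rcases hux with ⟨h1, h2⟩ | ⟨h1, h2⟩
    · rcases hxy with ⟨h3, h4⟩ | ⟨h3, h4⟩
      · -- u < x, ¬R u x ; x < y, ¬R x y
        refine Or.inl ⟨lt_trans h1 h3, fun hr => ?_⟩
        rcases transGen_cotrans hr x h1 h3 with h5 | h5
        · exact h2 h5
        · exact h4 h5
      · -- u < x, ¬R u x ; y < x, R y x
        rcases lt_trichotomy u y with h5 | h5 | h5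
        · refine Or.inl ⟨h5, fun hr => h2 (Relation.TransGen.trans hr h4)⟩
        · exact absurd (h5 ▸ h2) (fun h' => h' h4)
        · refine Or.inr ⟨h5, ?_⟩
          rcases transGen_cotrans h4 u h5 h1 with h6 | h6
          · exact h6
          · exact absurd h6 h2
    · rcases hxy with ⟨h3, h4⟩ | ⟨h3, h4⟩
      · -- x < u, R x u ; x < y, ¬R x y
        rcases lt_trichotomy u y with h5 | h5 | h5
        · refine Or.inl ⟨h5, fun hr => h4 (Relation.TransGen.trans h2 hr)⟩
        · exact absurd (h5 ▸ h2) (fun h' => h4 h')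
        · refine Or.inr ⟨h5, ?_⟩
          rcases transGen_cotrans h2 y h3 h5 with h6 | h6
          · exact absurd h6 h4
          · exact h6
      · -- x < u, R x u ; y < x, R y x
        exact Or.inr ⟨lt_trans h3 h1, Relation.TransGen.trans h4 h2⟩
  set rank : Fin n → ℕ := fun x => (Finset.univ.filter (fun u => L u x)).card with hrank
  have hmono : ∀ x y : Fin n, L x y → rank x < rank y := by
    intro x y hxy
    apply Finset.card_lt_card
    constructor
    · intro u hu
      simp only [Finset.mem_filter, Finset.mem_univ, true_and] at hu ⊢
      exact Ltrans u x y hu hxy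
    · intro hsub
      have hx : x ∈ Finset.univ.filter (fun u => L u y) := by
        simp only [Finset.mem_filter, Finset.mem_univ, true_and]; exact hxy
      have := hsub hx
      simp only [Finset.mem_filter, Finset.mem_univ, true_and] at this
      exact Lirr x this
  have hrank_lt : ∀ x, rank x < n := by
    intro x
    have h1 : (Finset.univ.filter (fun u => L u x)) ⊂ Finset.univ := by
      rw [Finset.ssubset_univ_iff]
      intro hec
      have hx2 : x ∈ Finset.univ.filter (fun u => L u x) := by
        rw [hec]; exact Finset.mem_univ x
      simp only [Finset.mem_filter, Finset.mem_univ, true_and] at hx2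
      exact Lirr x hx2
    have := Finset.card_lt_card h1
    simpa using this
  set f : Fin n → Fin n := fun x => ⟨rank x, hrank_lt x⟩ with hf
  have hinj : Function.Injective f := by
    intro x y hxy
    by_contra hne
    have h1 : rank x = rank y := by
      have := congrArg Fin.val hxy
      simpa [hf] using this
    rcases Ltot x y hne with h | h
    · exact absurd h1 (ne_of_lt (hmono x y h))
    · exact absurd h1.symm (ne_of_lt (hmono y x h))
  have hbij : Function.Bijective f := Finite.injective_iff_bijective.mp hinj
  set e := Equiv.ofBijective f hbij with he
  refine ⟨e.symm, ?_⟩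
  intro x y hxy
  have hes : (e.symm)⁻¹ = e := rfl
  rw [hes]
  have heval : ∀ u : Fin n, e u = f u := fun u => rfl
  rw [heval, heval]
  constructor
  · intro hlt
    have hr : rank y < rank x := hlt
    have hLyx : L y x := by
      rcases Ltot y x (fun hc => (lt_irrefl _ (hc ▸ hxy))) with h | h
      · exact h
      · exact absurd hr (not_lt.mpr (le_of_lt (hmono x y h)))
    rcases hLyx with ⟨h1, -⟩ | ⟨-, h2⟩
    · exact absurd (lt_trans h1 hxy) (lt_irrefl _)
    · exact h2
  · intro hR1
    have : L y x := Or.inr ⟨hxy, hR1⟩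
    exact hmono y x this

lemma chain_of_transGen {α : Type*} {r : α → α → Prop} {a b : α}
    (h : Relation.TransGen r a b) :
    ∃ m : ℕ, ∃ c : ℕ → α, 1 ≤ m ∧ c 0 = a ∧ c m = b ∧ ∀ i < m, r (c i) (c (i+1)) := by
  induction h with
  | @single b' h =>
    refine ⟨1, fun i => if i = 0 then a else b', le_refl 1, by simp, by simp, ?_⟩
    intro i hi
    interval_cases i
    simpa using h
  | @tail b' c' hab' hbc ih =>
    obtain ⟨m, c, hm, hc0, hcm, hcc⟩ := ih
    refine ⟨m + 1, fun i => if i ≤ m then c i else c', by omega, by simp [hc0], by simp, ?_⟩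
    intro i hi
    by_cases him : i < m
    · simpa [Nat.le_of_lt him, Nat.succ_le_of_lt him] using hcc i him
    · have hieq : i = m := by omega
      subst hieq
      simpa [hcm] using hbc

lemma reachable_of_chain {n : ℕ} (σ τ : Equiv.Perm (Fin n)) (m : ℕ) (hm : 1 ≤ m)
    (c : ℕ → Fin n) (hc : ∀ i < m, relST σ τ (c i) (c (i+1))) :
    BruhatReachable σ τ (Equiv.swap (c 0) (c m)) := by
  classical
  have mono : ∀ j, j ≤ m → ∀ i, i < j → c i < c j := by
    intro j
    induction j with
    | zero => intro _ i hi; omega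
    | succ k ih =>
      intro hk i hi
      have hck : c k < c (k+1) := (hc k (by omega)).1
      by_cases hik : i = k
      · exact hik ▸ hck
      · exact lt_trans (ih (by omega) i (by omega)) hck
  set ts : ℕ → Equiv.Perm (Fin n) :=
    (fun r => Equiv.swap (c (min r (2*m - r) - 1)) (c (min r (2*m - r)))) with hts
  set pp : ℕ → Equiv.Perm (Fin n) := partialProd ts with hpp
  have hpps : ∀ r, pp (r+1) = ts (r+1) * pp r := fun r => partialProd_succ ts r
  have P : ∀ r, r ≤ m → (pp r (c 0) = c r) ∧ (∀ k, 1 ≤ k → k ≤ r → pp r (c k) = c (k-1)) ∧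
      (∀ x, (∀ k, k ≤ r → x ≠ c k) → pp r x = x) := by
    intro r
    induction r with
    | zero =>
      intro _
      refine ⟨by simp [hpp, partialProd_zero], fun k hk1 hk2 => by omega, fun x hx => by
        simp [hpp, partialProd_zero]⟩
    | succ r ih =>
      intro hr1
      obtain ⟨ih1, ih2, ih3⟩ := ih (by omega)
      have htr : ts (r+1) = Equiv.swap (c r) (c (r+1)) := by
        have hmin : min (r+1) (2*m - (r+1)) = r + 1 := by omega
        simp only [hts, hmin, Nat.add_sub_cancel]
      have hstep : ∀ x, pp (r+1) x = Equiv.swap (c r) (c (r+1)) (pp r x) := by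
        intro x
        rw [hpps r, htr]
        rfl
      refine ⟨?_, ?_, ?_⟩
      · rw [hstep, ih1, Equiv.swap_apply_left]
      · intro k hk1 hk2
        rw [hstep]
        by_cases hkr : k ≤ r
        · rw [ih2 k hk1 hkr]
          apply Equiv.swap_apply_of_ne_of_ne
          · exact ne_of_lt (mono r (by omega) (k-1) (by omega))
          · exact ne_of_lt (mono (r+1) (by omega) (k-1) (by omega))
        · have hk : k = r + 1 := by omega
          subst hk
          rw [ih3 (c (r+1)) (fun k' hk' => ne_of_gt (mono (r+1) (by omega) k' (by omega))),
            Equiv.swap_apply_right]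
          congr 1
      · intro x hx
        rw [hstep, ih3 x (fun k hk => hx k (by omega))]
        exact Equiv.swap_apply_of_ne_of_ne (hx r (by omega)) (hx (r+1) (by omega))
  have Q : ∀ j, j ≤ m - 1 → (pp (m+j) (c 0) = c m) ∧
      (∀ k, 1 ≤ k → k ≤ m - j - 1 → pp (m+j) (c k) = c (k-1)) ∧
      (∀ k, m - j ≤ k → k ≤ m - 1 → pp (m+j) (c k) = c k) ∧
      (pp (m+j) (c m) = c (m - j - 1)) ∧
      (∀ x, (∀ k, k ≤ m → x ≠ c k) → pp (m+j) x = x) := by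
    intro j
    induction j with
    | zero =>
      intro _
      obtain ⟨p1, p2, p3⟩ := P m (le_refl m)
      refine ⟨by simpa using p1, fun k hk1 hk2 => by simpa using p2 k hk1 (by omega),
        fun k hk1 hk2 => by omega, by simpa using p2 m hm (le_refl m), fun x hx => by
          simpa using p3 x hx⟩
    | succ j ih =>
      intro hj1
      obtain ⟨ih1, ih2, ih3, ih4, ih5⟩ := ih (by omega)
      have hjm : j + 2 ≤ m := by omega
      have htr : ts (m+j+1) = Equiv.swap (c (m-j-2)) (c (m-j-1)) := by
        have hmin : min (m+j+1) (2*m - (m+j+1)) = m - j - 1 := by omega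
        have : m - j - 1 - 1 = m - j - 2 := by omega
        simp only [hts, hmin, this]
      have hstep : ∀ x, pp (m+(j+1)) x = Equiv.swap (c (m-j-2)) (c (m-j-1)) (pp (m+j) x) := by
        intro x
        have : m + (j+1) = (m+j) + 1 := by omega
        rw [this, hpps (m+j), ← htr]
        have : m + j + 1 = m + (j + 1) := by omega
        rw [this]
        have h2 : ts (m + (j+1)) = ts (m+j+1) := by rw [show m + (j+1) = m+j+1 from rfl]
        rfl
      refine ⟨?_, ?_, ?_, ?_, ?_⟩
      · rw [hstep, ih1]
        apply Equiv.swap_apply_of_ne_of_ne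
        · exact ne_of_gt (mono m (le_refl m) (m-j-2) (by omega))
        · exact ne_of_gt (mono m (le_refl m) (m-j-1) (by omega))
      · intro k hk1 hk2
        rw [hstep, ih2 k hk1 (by omega)]
        apply Equiv.swap_apply_of_ne_of_ne
        · exact ne_of_lt (mono (m-j-2) (by omega) (k-1) (by omega))
        · exact ne_of_lt (mono (m-j-1) (by omega) (k-1) (by omega))
      · intro k hk1 hk2
        rw [hstep]
        by_cases hke : k = m - j - 1
        · subst hke
          rw [ih2 (m-j-1) (by omega) (le_refl _)]
          have : m - j - 1 - 1 = m - j - 2 := by omega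
          rw [this, Equiv.swap_apply_left]
        · rw [ih3 k (by omega) hk2]
          apply Equiv.swap_apply_of_ne_of_ne
          · exact ne_of_gt (mono k (by omega) (m-j-2) (by omega))
          · exact ne_of_gt (mono k (by omega) (m-j-1) (by omega))
      · rw [hstep, ih4]
        have : m - (j+1) - 1 = m - j - 2 := by omega
        rw [this, Equiv.swap_apply_right]
      · intro x hx
        rw [hstep, ih5 x hx]
        exact Equiv.swap_apply_of_ne_of_ne (hx (m-j-2) (by omega)) (hx (m-j-1) (by omega))
  have hfinal : pp (2*m - 1) = Equiv.swap (c 0) (c m) := by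
    have h2m : 2*m - 1 = m + (m-1) := by omega
    obtain ⟨q1, q2, q3, q4, q5⟩ := Q (m-1) (le_refl _)
    apply Equiv.ext
    intro x
    rw [h2m]
    by_cases hex : ∃ k, k ≤ m ∧ x = c k
    · obtain ⟨k, hk, rfl⟩ := hex
      by_cases hk0 : k = 0
      · rw [hk0, q1, Equiv.swap_apply_left]
      · by_cases hkm : k = m
        · rw [hkm, q4]
          have h0 : m - (m-1) - 1 = 0 := by omega
          rw [h0, Equiv.swap_apply_right]
        · rw [q3 k (by omega) (by omega)]
          exact (Equiv.swap_apply_of_ne_of_ne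
            (ne_of_gt (mono k (by omega) 0 (by omega)))
            (ne_of_lt (mono m (le_refl m) k (by omega)))).symm
    · push_neg at hex
      rw [q5 x (fun k hk => hex k hk)]
      exact (Equiv.swap_apply_of_ne_of_ne (hex 0 (by omega)) (hex m (le_refl m))).symm
  refine ⟨2*m - 1, by omega, ts, ?_, hfinal.symm, ?_⟩
  · -- membership
    intro r hr1 hr2
    set i := min r (2*m - r) with hi
    have hi1 : 1 ≤ i := by omega
    have him : i ≤ m := by omega
    have htr : ts r = Equiv.swap (c (i-1)) (c i) := rfl
    have hrel : relST σ τ (c (i-1)) (c i) := by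
      have := hc (i-1) (by omega)
      have heq : i - 1 + 1 = i := by omega
      rwa [heq] at this
    rcases hrel.2 with hσ | hσ
    · left
      refine ⟨⟨c (i-1), c i, ne_of_lt hrel.1, htr.symm ▸ rfl⟩, ?_⟩
      rw [htr]
      exact invNum_swap_mul_lt σ hrel.1 hσ
    · right
      refine ⟨⟨c (i-1), c i, ne_of_lt hrel.1, htr.symm ▸ rfl⟩, ?_⟩
      rw [htr]
      exact invNum_swap_mul_lt τ hrel.1 hσ
  · -- increasing
    intro r hr1 hr2
    show invNum (pp r) < invNum (pp (r+1))
    rw [hpps r]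
    by_cases hrm : r + 1 ≤ m
    · have htr : ts (r+1) = Equiv.swap (c r) (c (r+1)) := by
        have hmin : min (r+1) (2*m - (r+1)) = r + 1 := by omega
        simp only [hts, hmin, Nat.add_sub_cancel]
      obtain ⟨p1, p2, p3⟩ := P r (by omega)
      rw [htr]
      apply invNum_lt_of_ord
      · exact mono (r+1) hrm r (by omega)
      · have h1 : (pp r)⁻¹ (c r) = c 0 := by rw [← p1, Equiv.Perm.coe_inv, Equiv.symm_apply_apply]
        have h2 : (pp r)⁻¹ (c (r+1)) = c (r+1) := by
          have := p3 (c (r+1)) (fun k hk => ne_of_gt (mono (r+1) hrm k (by omega)))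
          rw [← this, Equiv.Perm.coe_inv, Equiv.symm_apply_apply, this]
        rw [h1, h2]
        exact mono (r+1) hrm 0 (by omega)
    · set j := r - m with hj
      have hrj : r = m + j := by omega
      have hjm : j ≤ m - 2 := by omega
      obtain ⟨q1, q2, q3, q4, q5⟩ := Q j (by omega)
      have htr : ts (r+1) = Equiv.swap (c (m-j-2)) (c (m-j-1)) := by
        have hmin : min (r+1) (2*m - (r+1)) = m - j - 1 := by omega
        have h2 : m - j - 1 - 1 = m - j - 2 := by omega
        simp only [hts, hmin, h2]
      rw [htr, hrj]
      apply invNum_lt_of_ord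
      · exact mono (m-j-1) (by omega) (m-j-2) (by omega)
      · have h1 : (pp (m+j))⁻¹ (c (m-j-2)) = c (m-j-1) := by
          have := q2 (m-j-1) (by omega) (le_refl _)
          have he : m - j - 1 - 1 = m - j - 2 := by omega
          rw [he] at this
          rw [← this, Equiv.Perm.coe_inv, Equiv.symm_apply_apply]
        have h2 : (pp (m+j))⁻¹ (c (m-j-1)) = c m := by
          rw [← q4, Equiv.Perm.coe_inv, Equiv.symm_apply_apply]
        rw [h1, h2]
        exact mono m (le_refl m) (m-j-1) (by omega)

end Aux

/-- every left reflection of the join `σ ∨_R τ` is reachable by a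
`(σ,τ)`-Bruhat path. -/
theorem TL_join_subset_reachable {n : ℕ} (σ τ w : Equiv.Perm (Fin n))
    (hjoin : wleR σ w ∧ wleR τ w ∧ ∀ z, wleR σ z → wleR τ z → wleR w z)
    (a b : Fin n) (hab : a < b)
    (ht : invNum (Equiv.swap a b * w) < invNum w) :
    BruhatReachable σ τ (Equiv.swap a b) := by
  classical
  obtain ⟨hσw, hτw, hmin⟩ := hjoin
  obtain ⟨z, hz⟩ := exists_realizer σ τ
  have hσz : wleR σ z := (wleR_iff σ z).mpr
    (fun x y hxy hlt => (hz x y hxy).mpr (Relation.TransGen.single ⟨hxy, Or.inl hlt⟩))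
  have hτz : wleR τ z := (wleR_iff τ z).mpr
    (fun x y hxy hlt => (hz x y hxy).mpr (Relation.TransGen.single ⟨hxy, Or.inr hlt⟩))
  have hwz : wleR w z := hmin z hσz hτz
  have hwab : w⁻¹ b < w⁻¹ a := by
    rcases lt_trichotomy (w⁻¹ b) (w⁻¹ a) with h | h | h
    · exact h
    · exact absurd (w⁻¹.injective h) (ne_of_gt hab)
    · exact absurd ht (not_lt.mpr (le_of_lt (invNum_lt_of_ord w hab h)))
  have hzab : z⁻¹ b < z⁻¹ a := (wleR_iff w z).mp hwz a b hab hwab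
  have hR : Relation.TransGen (relST σ τ) a b := (hz a b hab).mp hzab
  obtain ⟨m, c, hm1, hc0, hcm, hcc⟩ := chain_of_transGen hR
  rw [← hc0, ← hcm]
  exact reachable_of_chain σ τ m hm1 c hcc
end

section
/- In the finite dihedral group I_2(m) with generators s, r, if u, v are two elements with u ≰_R v and v ≰_R u in the right weak order, then both simple reflections s and r belong to T_L(u) ∪ T_L(v). -/
open Fin.NatCast

/-- Alternating word in `Fin 2` starting with `j`. -/
def dihedralWord : Fin 2 → ℕ → List (Fin 2)
  | _, 0 => []
  | j, n+1 => j :: dihedralWord (j + 1) n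

lemma dihedralWord_length (j : Fin 2) (n : ℕ) : (dihedralWord j n).length = n := by
  induction n generalizing j with
  | zero => rfl
  | succ n ih => simp [dihedralWord, ih]

lemma dihedralWord_append (j : Fin 2) (a c : ℕ) :
    dihedralWord j (a + c) = dihedralWord j a ++ dihedralWord (j + (a : Fin 2)) c := by
  induction a generalizing j with
  | zero => simp [dihedralWord]
  | succ a ih =>
    have h : a + 1 + c = (a + c) + 1 := by ring
    rw [h]
    show j :: dihedralWord (j + 1) (a + c) = (j :: dihedralWord (j + 1) a) ++ _
    rw [ih (j + 1)]
    have : j + 1 + (a : Fin 2) = j + ((a : ℕ) + 1 : ℕ) := by push_cast; abel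
    rw [this]
    rfl

lemma fin2_eq_add_one {i j : Fin 2} (h : i ≠ j) : i = j + 1 := by
  fin_cases i <;> fin_cases j <;> simp_all

lemma fin2_eq_of_ne {i j k : Fin 2} (h : i ≠ j) (h' : k ≠ i) : k = j := by
  fin_cases i <;> fin_cases j <;> fin_cases k <;> simp_all

/-- Key structure lemma: in a rank-2 Coxeter system, an element with no left descent
at `i` equals the product of the alternating word starting with `j` of its length. -/
lemma descent_free_alt {W : Type*} [Group W] {M : CoxeterMatrix (Fin 2)}
    (cs : CoxeterSystem M W) :
    ∀ (n : ℕ) (w : W) (i j : Fin 2), i ≠ j → cs.length w = n →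
      ¬ cs.IsLeftDescent w i → w = cs.wordProd (dihedralWord j n) := by
  intro n
  induction n with
  | zero =>
    intro w i j _ hl _
    rw [cs.length_eq_zero_iff] at hl
    simp [hl, dihedralWord]
  | succ n ih =>
    intro w i j hij hl hdi
    have hw1 : w ≠ 1 := by
      intro h; rw [h, cs.length_one] at hl; omega
    obtain ⟨k, hk⟩ := cs.exists_leftDescent_of_ne_one hw1
    have hkj : k = j := fin2_eq_of_ne hij (fun h => hdi (h ▸ hk))
    rw [hkj] at hk
    have hk' := (cs.isLeftDescent_iff).mp hk
    have hlw' : cs.length (cs.simple j * w) = n := by omega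
    have hndj : ¬ cs.IsLeftDescent (cs.simple j * w) j := by
      intro h
      unfold CoxeterSystem.IsLeftDescent at h
      rw [cs.simple_mul_simple_cancel_left] at h
      omega
    have hrec := ih (cs.simple j * w) j i hij.symm hlw' hndj
    have hji : i = j + 1 := fin2_eq_add_one hij
    have hww : w = cs.simple j * (cs.simple j * w) := by
      rw [cs.simple_mul_simple_cancel_left]
    rw [hww, hrec, ← cs.wordProd_cons]
    congr 1
    show (j :: dihedralWord i n) = dihedralWord j (n + 1)
    rw [hji]
    rfl

lemma comparable_of_alt {W : Type*} [Group W] {M : CoxeterMatrix (Fin 2)}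
    (cs : CoxeterSystem M W) (j : Fin 2) {a b : ℕ} (hab : a ≤ b) {u v : W}
    (hu : u = cs.wordProd (dihedralWord j a)) (hv : v = cs.wordProd (dihedralWord j b))
    (hlu : cs.length u = a) (hlv : cs.length v = b) :
    cs.length u + cs.length (u⁻¹ * v) = cs.length v := by
  have hb : b = a + (b - a) := by omega
  have hsplit : v = u * cs.wordProd (dihedralWord (j + (a : Fin 2)) (b - a)) := by
    rw [hu, hv, ← cs.wordProd_append, ← dihedralWord_append, ← hb]
  have h1 : u⁻¹ * v = cs.wordProd (dihedralWord (j + (a : Fin 2)) (b - a)) := by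
    rw [hsplit]; group
  have h2 : cs.length (u⁻¹ * v) ≤ b - a := by
    rw [h1]
    have := cs.length_wordProd_le (dihedralWord (j + (a : Fin 2)) (b - a))
    rwa [dihedralWord_length] at this
  have h3 : cs.length v ≤ cs.length u + cs.length (u⁻¹ * v) := by
    have := cs.length_mul_le u (u⁻¹ * v)
    rwa [mul_inv_cancel_left] at this
  omega

/-- in the finite dihedral group `I₂(m+2)` (the Coxeter group of the
matrix `CoxeterMatrix.I₂ₘ m`), if `u ≰_R v` and `v ≰_R u` in the right weak order,
then both simple reflections `s = s₀` and `r = s₁` lie in `T_L(u) ∪ T_L(v)`. -/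
theorem dihedral_incomparable_simples {W : Type*} [Group W] (m : ℕ)
    (cs : CoxeterSystem (CoxeterMatrix.I m) W) (u v : W)
    (h1 : ¬ (cs.length u + cs.length (u⁻¹ * v) = cs.length v))
    (h2 : ¬ (cs.length v + cs.length (v⁻¹ * u) = cs.length u)) :
    (cs.IsLeftInversion u (cs.simple 0) ∨ cs.IsLeftInversion v (cs.simple 0)) ∧
    (cs.IsLeftInversion u (cs.simple 1) ∨ cs.IsLeftInversion v (cs.simple 1)) := by
  have key : ∀ i : Fin 2, cs.IsLeftDescent u i ∨ cs.IsLeftDescent v i := by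
    intro i
    by_contra h
    push_neg at h
    obtain ⟨hu, hv⟩ := h
    have hij : i ≠ i + 1 := by fin_cases i <;> decide
    have hu' := descent_free_alt cs (cs.length u) u i (i + 1) hij rfl hu
    have hv' := descent_free_alt cs (cs.length v) v i (i + 1) hij rfl hv
    rcases le_total (cs.length u) (cs.length v) with hle | hle
    · exact h1 (comparable_of_alt cs (i + 1) hle hu' hv' rfl rfl)
    · exact h2 (comparable_of_alt cs (i + 1) hle hv' hu' rfl rfl)
  constructor
  · rcases key 0 with h | h
    · exact Or.inl ((cs.isLeftInversion_simple_iff_isLeftDescent u 0).mpr h)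
    · exact Or.inr ((cs.isLeftInversion_simple_iff_isLeftDescent v 0).mpr h)
  · rcases key 1 with h | h
    · exact Or.inl ((cs.isLeftInversion_simple_iff_isLeftDescent u 1).mpr h)
    · exact Or.inr ((cs.isLeftInversion_simple_iff_isLeftDescent v 1).mpr h)
end
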